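/- arXiv:1012.2588 — 4 statements merged into one kernel-verified Lean document; each statement's English description precedes it below -/
import Mathlib

section
/- Let H be a separable Hilbert space and X a set of closed densely defined operators in H. Then there is a countable subset X₀ of X such that the von Neumann algebra generated by X₀ equals the von Neumann algebra generated by X. -/
open LinearPMap

variable {H : Type*} [NormedAddCommGroup H] [InnerProductSpace ℂ H] [CompleteSpace H]

/-- A bounded everywhere-defined operator `R` commutes with a (possibly unbounded)
operator `T`. -/
def CommutesWith (R : H →L[ℂ] H) (T : H →ₗ.[ℂ] H) : Prop :=
  ∀ ψ : T.domain, ∃ h : R ψ ∈ T.domain, R (T ψ) = T ⟨R ψ, h⟩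

/-- The commutant of a set of (possibly unbounded) operators. -/
def Commutant (X : Set (H →ₗ.[ℂ] H)) : Set (H →L[ℂ] H) :=
  {R | ∀ T ∈ X, CommutesWith R T}

/-- The von Neumann algebra `A(X)` generated by a set `X` of closed densely defined
operators: the bicommutant `(X ∪ X*)′′`, where the second commutant is the ordinary
centralizer inside `L(H)`. -/
def VNGen (X : Set (H →ₗ.[ℂ] H)) : Set (H →L[ℂ] H) :=
  Set.centralizer (Commutant (X ∪ (fun T : H →ₗ.[ℂ] H => T.adjoint) '' X))

/-!
On the ball `‖R‖ ≤ C` of `L(H)`, the strong operator topology agrees with pointwise convergence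
on a countable dense subset of `H`, so the ball is second countable. Commuting with a closed
operator `T` means that `R × R` maps the graph of `T` into itself, a strongly closed condition,
and `T*` is closed when `T` is densely defined. So on each ball the commutant of `X ∪ X*` is an
intersection of closed sets indexed by `X`, and by the Lindelöf property countably many of them
suffice; `X₀` is the union of these countable sets over the balls of radius `n ∈ ℕ`.
-/

open Filter Topology

theorem isClosed_biInter_countable {α ι : Type*} [TopologicalSpace α] [SecondCountableTopology α]
    (I : Set ι) (s : ι → Set α) (hs : ∀ i ∈ I, IsClosed (s i)) :
    ∃ J ⊆ I, J.Countable ∧ ⋂ i ∈ J, s i = ⋂ i ∈ I, s i := by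
  obtain ⟨J, hJI, hJ, hU⟩ :=
    TopologicalSpace.isOpen_biUnion_countable I (fun i => (s i)ᶜ) fun i hi => (hs i hi).isOpen_compl
  refine ⟨J, hJI, hJ, compl_injective ?_⟩
  simpa only [Set.compl_iInter] using hU

theorem continuous_apply_of_dense {𝕜 S E F : Type*} [NontriviallyNormedField 𝕜]
    [SeminormedAddCommGroup E] [NormedSpace 𝕜 E] [SeminormedAddCommGroup F] [NormedSpace 𝕜 F]
    [TopologicalSpace S] {f : S → E →L[𝕜] F} {C : ℝ} (hf : ∀ s, ‖f s‖ ≤ C)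
    {D : Set E} (hD : Dense D) (hfD : ∀ x ∈ D, Continuous fun s => f s x) (x : E) :
    Continuous fun s => f s x := by
  have hequi : Equicontinuous fun s => ⇑(f s) :=
    ((NormedSpace.equicontinuous_TFAE f).out 1 5).mpr (⟨C, hf⟩ : ∃ C, ∀ s, ‖f s‖ ≤ C)
  refine continuous_iff_continuousAt.mpr fun p => ?_
  have hclosed : IsClosed {x | Tendsto (fun s => f s x) (𝓝 p) (𝓝 (f p x))} :=
    hequi.isClosed_setOfPred_tendsto (f p).continuous
  have hDsub : D ⊆ {x | Tendsto (fun s => f s x) (𝓝 p) (𝓝 (f p x))} :=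
    fun y hy => (hfD y hy).continuousAt
  exact hclosed.closure_subset_iff.mpr hDsub (hD.closure_eq ▸ Set.mem_univ x)

omit [CompleteSpace H] in
theorem commutesWith_iff_mem_graph {R : H →L[ℂ] H} {T : H →ₗ.[ℂ] H} :
    CommutesWith R T ↔ ∀ ψ : T.domain, ((R ψ : H), R (T ψ)) ∈ T.graph := by
  refine forall_congr' fun ψ => ⟨fun ⟨h, hR⟩ => (image_iff h).mp hR, fun hψ => ?_⟩
  exact ⟨mem_domain_of_mem_graph hψ, (image_iff _).mpr hψ⟩

omit [CompleteSpace H] in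
theorem isClosed_setOf_commutesWith {S : Type*} [TopologicalSpace S] {f : S → H →L[ℂ] H}
    (hf : ∀ x, Continuous fun s => f s x) {T : H →ₗ.[ℂ] H} (hT : T.IsClosed) :
    IsClosed {s | CommutesWith (f s) T} := by
  simp only [commutesWith_iff_mem_graph, Set.ofPred_forall]
  exact isClosed_iInter fun ψ => hT.preimage ((hf ψ).prodMk (hf (T ψ)))

theorem commutant_union_adjoint_image_anti {Y Z : Set (H →ₗ.[ℂ] H)} (h : Y ⊆ Z) :
    Commutant (Z ∪ (fun T : H →ₗ.[ℂ] H => T.adjoint) '' Z) ⊆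
      Commutant (Y ∪ (fun T : H →ₗ.[ℂ] H => T.adjoint) '' Y) :=
  fun _ hR T hT => hR T (Set.union_subset_union h (Set.image_mono h) hT)

theorem commutant_union_adjoint_image (Y : Set (H →ₗ.[ℂ] H)) :
    Commutant (Y ∪ (fun T : H →ₗ.[ℂ] H => T.adjoint) '' Y) =
      ⋂ T ∈ Y, {R | CommutesWith R T ∧ CommutesWith R T.adjoint} := by
  ext R
  simp only [Set.mem_iInter]
  constructor
  · exact fun h T hT => ⟨h T (.inl hT), h _ (.inr ⟨T, hT, rfl⟩)⟩
  · rintro h _ (hT | ⟨T, hT, rfl⟩)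
    exacts [(h _ hT).1, (h T hT).2]

theorem exists_countable_subset_mem_commutant_of_norm_le [TopologicalSpace.SeparableSpace H]
    (X : Set (H →ₗ.[ℂ] H)) (hclosed : ∀ T ∈ X, T.IsClosed)
    (hdense : ∀ T ∈ X, Dense (T.domain : Set H)) (C : ℝ) :
    ∃ X₀ ⊆ X, X₀.Countable ∧ ∀ R : H →L[ℂ] H, ‖R‖ ≤ C →
      R ∈ Commutant (X₀ ∪ (fun T : H →ₗ.[ℂ] H => T.adjoint) '' X₀) →
      R ∈ Commutant (X ∪ (fun T : H →ₗ.[ℂ] H => T.adjoint) '' X) := by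
  obtain ⟨D, hDc, hD⟩ := TopologicalSpace.exists_countable_dense H
  have := hDc.to_subtype
  let B := {R : H →L[ℂ] H // ‖R‖ ≤ C}
  let _ : TopologicalSpace B := .induced (fun R (d : D) => R.1 d) inferInstance
  have : SecondCountableTopology B := TopologicalSpace.secondCountableTopology_induced _ _ _
  have hrestrict : Continuous fun (R : B) (d : D) => R.1 d := continuous_induced_dom
  have hcont : ∀ ψ, Continuous fun R : B => R.1 ψ :=
    continuous_apply_of_dense (fun R : B => R.2) hD fun d hd =>
      continuous_pi_iff.mp hrestrict ⟨d, hd⟩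
  have hcomm : ∀ T : H →ₗ.[ℂ] H, T.IsClosed → IsClosed {R : B | CommutesWith R.1 T} :=
    fun T hT => isClosed_setOf_commutesWith hcont hT
  obtain ⟨X₀, hX₀X, hX₀, hinter⟩ := isClosed_biInter_countable X
    (fun T => Subtype.val ⁻¹' {R | CommutesWith R T ∧ CommutesWith R T.adjoint} : _ → Set B)
    fun T hT => (hcomm T (hclosed T hT)).inter (hcomm _ (adjoint_isClosed (hdense T hT)))
  simp only [← Set.preimage_iInter₂, ← commutant_union_adjoint_image] at hinter
  exact ⟨X₀, hX₀X, hX₀, fun R hR => (Set.ext_iff.mp hinter ⟨R, hR⟩).mp⟩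

/-- In a separable Hilbert space, every set of closed densely defined operators has a
countable subset generating the same von Neumann algebra. -/
theorem exists_countable_subset_vNGen_eq
    [TopologicalSpace.SeparableSpace H]
    (X : Set (H →ₗ.[ℂ] H))
    (hclosed : ∀ T ∈ X, T.IsClosed)
    (hdense : ∀ T ∈ X, Dense (T.domain : Set H)) :
    ∃ X₀ ⊆ X, X₀.Countable ∧ VNGen X₀ = VNGen X := by
  choose Xₙ hXₙX hXₙ hball using
    fun n : ℕ => exists_countable_subset_mem_commutant_of_norm_le X hclosed hdense n
  have hsub : (⋃ n, Xₙ n) ⊆ X := Set.iUnion_subset hXₙX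
  refine ⟨⋃ n, Xₙ n, hsub, Set.countable_iUnion hXₙ, ?_⟩
  unfold VNGen
  congr 1
  exact le_antisymm (fun R hR => hball ⌈‖R‖⌉₊ R (Nat.le_ceil _)
      (commutant_union_adjoint_image_anti (Set.subset_iUnion Xₙ _) hR))
    (commutant_union_adjoint_image_anti hsub)
end

section
/- Let S be a Polish space, H a Hilbert space, E a spectral measure for (S,H), and U a bounded operator on H commuting with the spectral integral J^E_f for every continuous complex function f on S. Then U commutes with E(A) for every Borel set A ⊂ S. -/
open LinearPMap MeasureTheory

variable {H : Type*} [NormedAddCommGroup H] [InnerProductSpace ℂ H] [CompleteSpace H]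

/-- A projection-valued spectral measure on a measurable space `S`, together with the
associated scalar measures `E_ψ(A) = ⟪E(A)ψ, ψ⟫ = ‖E(A)ψ‖²`. -/
structure SpectralMeasure (S : Type*) [MeasurableSpace S] (H : Type*)
    [NormedAddCommGroup H] [InnerProductSpace ℂ H] [CompleteSpace H] where
  proj : Set S → H →L[ℂ] H
  idem : ∀ A : Set S, MeasurableSet A → proj A * proj A = proj A
  selfadj : ∀ A : Set S, MeasurableSet A → IsSelfAdjoint (proj A)
  proj_univ : proj Set.univ = 1
  meas : H → Measure S
  meas_eq : ∀ (ψ : H) (A : Set S), MeasurableSet A →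
    meas ψ A = (‖proj A ψ‖₊ : ENNReal) ^ 2

/-- `T = J^E_f`, the spectral integral of `f` with respect to `E`, characterized by
its domain and quadratic form. -/
def IsSpectralIntegralOf {S : Type*} [MeasurableSpace S]
    (E : SpectralMeasure S H) (f : S → ℂ) (T : H →ₗ.[ℂ] H) : Prop :=
  (∀ ψ : H, ψ ∈ T.domain ↔ Integrable (fun s => ‖f s‖ ^ 2) (E.meas ψ)) ∧
  ∀ ψ : T.domain, (inner ℂ (ψ : H) (T ψ) : ℂ) = ∫ s, f s ∂(E.meas ψ)

/-!
Approximate the indicator of a closed set `F` pointwise by continuous `gₙ : S → [0, 1]`.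
For measurable `0 ≤ g ≤ C` the spectral integral `J_g` exists: it is the weak integral
`∫₀^C E{g > t} dt`, whose quadratic form is `ψ ↦ ∫ g dE_ψ` by the layer-cake formula. Hence `U`
commutes with every `J_{gₙ}`, and `⟪J_{gₙ} ψ, ψ⟫ = ∫ gₙ dE_ψ → E_ψ(F) = ⟪E(F) ψ, ψ⟫` by dominated
convergence; by polarization `J_{gₙ} → E(F)` weakly, so `U` commutes with `E(F)`. The Borel sets
`A` for which `U` commutes with `E(A)` are closed under complements (`E(Aᶜ) = 1 - E(A)`) and under
disjoint countable unions (`E(⋃ Aᵢ)` is the weak sum of the `E(Aᵢ)`), so they are all Borel sets.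
-/

open Set Filter Topology Function

theorem HasOuterApproxClosed.tendsto_integral_apprSeq {X : Type*} [TopologicalSpace X]
    [HasOuterApproxClosed X] [MeasurableSpace X] [OpensMeasurableSpace X] {F : Set X}
    (hF : IsClosed F) (μ : Measure X) [IsFiniteMeasure μ] :
    Tendsto (fun n => ∫ x, (hF.apprSeq n x : ℝ) ∂μ) atTop (𝓝 (μ.real F)) := by
  have hlim := tendsto_integral_of_dominated_convergence (μ := μ)
    (F := fun n x => (hF.apprSeq n x : ℝ)) (f := F.indicator fun _ => 1) (fun _ => 1)
    (fun n => (NNReal.continuous_coe.comp (hF.apprSeq n).continuous).aestronglyMeasurable)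
    (integrable_const 1)
    (fun n => ae_of_all _ fun x => by simpa using apprSeq_apply_le_one hF n x)
    (ae_of_all _ fun x => by
      simpa [NNReal.coe_indicator] using
        (NNReal.tendsto_coe.mpr (tendsto_pi_nhds.mp (tendsto_apprSeq hF) x)))
  convert hlim using 2
  exact (integral_indicator_one hF.measurableSet).symm

section WeakLimit

variable {ι : Type*} {l : Filter ι} {T : ι → H →L[ℂ] H} {P : H →L[ℂ] H}

omit [CompleteSpace H] in
theorem tendsto_inner_apply_of_tendsto_inner_apply_self
    (h : ∀ z, Tendsto (fun i => inner ℂ (T i z) z) l (𝓝 (inner ℂ (P z) z))) (x y : H) :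
    Tendsto (fun i => inner ℂ (T i x) y) l (𝓝 (inner ℂ (P x) y)) := by
  have hpol := fun A : H →L[ℂ] H => inner_map_polarization' (A : H →ₗ[ℂ] H) x y
  simp only [ContinuousLinearMap.coe_coe] at hpol
  simp_rw [hpol]
  exact ((((h _).sub (h _)).sub ((h _).const_mul _)).add ((h _).const_mul _)).div_const _

theorem commute_of_tendsto_inner_apply_self [l.NeBot] {U : H →L[ℂ] H}
    (hT : ∀ i, Commute U (T i))
    (h : ∀ z, Tendsto (fun i => inner ℂ (T i z) z) l (𝓝 (inner ℂ (P z) z))) :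
    Commute U P := by
  ext x
  refine ext_inner_right ℂ fun y => ?_
  have hUT : ∀ i, U (T i x) = T i (U x) := fun i => congrArg (· x) (hT i).eq
  have hlim := tendsto_inner_apply_of_tendsto_inner_apply_self h x (U.adjoint y)
  simp_rw [ContinuousLinearMap.adjoint_inner_right, hUT] at hlim
  exact tendsto_nhds_unique hlim (tendsto_inner_apply_of_tendsto_inner_apply_self h (U x) y)

end WeakLimit

omit [CompleteSpace H] in
theorem commute_of_commutesWith_toPMap {U T : H →L[ℂ] H}
    (h : CommutesWith U ((T : H →ₗ[ℂ] H).toPMap ⊤)) : Commute U T :=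
  ContinuousLinearMap.ext fun x => (h ⟨x, trivial⟩).2

namespace SpectralMeasure

variable {S : Type*} [MeasurableSpace S] (E : SpectralMeasure S H)

instance isFiniteMeasure_meas (ψ : H) : IsFiniteMeasure (E.meas ψ) :=
  ⟨by simp [E.meas_eq ψ _ MeasurableSet.univ, E.proj_univ]⟩

theorem measureReal_meas {A : Set S} (hA : MeasurableSet A) (ψ : H) :
    (E.meas ψ).real A = ‖E.proj A ψ‖ ^ 2 := by
  simp [Measure.real, E.meas_eq ψ A hA]

theorem measureReal_meas_univ (ψ : H) : (E.meas ψ).real univ = ‖ψ‖ ^ 2 := by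
  simp [E.measureReal_meas MeasurableSet.univ, E.proj_univ]

theorem inner_proj_apply_self {A : Set S} (hA : MeasurableSet A) (ψ : H) :
    inner ℂ (E.proj A ψ) ψ = ((E.meas ψ).real A : ℂ) := by
  have hadj : (E.proj A).adjoint = E.proj A := (E.selfadj A hA).adjoint_eq
  have hidem : E.proj A (E.proj A ψ) = E.proj A ψ := by
    simpa using congrArg (· ψ) (E.idem A hA)
  rw [← hidem, ← ContinuousLinearMap.adjoint_inner_right, hadj,
    inner_self_eq_norm_sq_to_K, E.measureReal_meas hA]
  norm_cast

theorem norm_proj_apply_le {A : Set S} (hA : MeasurableSet A) (ψ : H) :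
    ‖E.proj A ψ‖ ≤ ‖ψ‖ := by
  have h := measureReal_mono (μ := E.meas ψ) (subset_univ A)
  rw [E.measureReal_meas hA, E.measureReal_meas_univ] at h
  exact (pow_le_pow_iff_left₀ (norm_nonneg _) (norm_nonneg _) two_ne_zero).mp h

theorem norm_inner_proj_apply_le {A : Set S} (hA : MeasurableSet A) (x y : H) :
    ‖inner ℂ (E.proj A x) y‖ ≤ ‖x‖ * ‖y‖ :=
  (norm_inner_le_norm _ _).trans (mul_le_mul_of_nonneg_right (E.norm_proj_apply_le hA x)
    (norm_nonneg y))

theorem proj_compl {A : Set S} (hA : MeasurableSet A) : E.proj Aᶜ = 1 - E.proj A := by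
  refine ContinuousLinearMap.coe_injective ((ext_inner_map _ _).mp fun ψ => ?_)
  simp [E.inner_proj_apply_self hA.compl, inner_sub_left, E.inner_proj_apply_self hA,
    measureReal_compl hA, E.measureReal_meas_univ]

theorem hasSum_inner_proj_apply_self {f : ℕ → Set S} (hm : ∀ i, MeasurableSet (f i))
    (hd : Pairwise (Disjoint on f)) (ψ : H) :
    HasSum (fun i => inner ℂ (E.proj (f i) ψ) ψ) (inner ℂ (E.proj (⋃ i, f i) ψ) ψ) := by
  simp only [E.inner_proj_apply_self (hm _), E.inner_proj_apply_self (MeasurableSet.iUnion hm)]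
  refine Complex.hasSum_ofReal.mpr ?_
  simpa [Measure.toSignedMeasure_apply_measurable, hm, MeasurableSet.iUnion hm] using
    (E.meas ψ).toSignedMeasure.hasSum_of_disjoint_iUnion hm hd

theorem commute_proj_compl {U : H →L[ℂ] H} {A : Set S} (hA : MeasurableSet A)
    (h : Commute U (E.proj A)) : Commute U (E.proj Aᶜ) := by
  rw [E.proj_compl hA]
  exact (Commute.one_right U).sub_right h

theorem commute_proj_iUnion {U : H →L[ℂ] H} {f : ℕ → Set S} (hm : ∀ i, MeasurableSet (f i))
    (hd : Pairwise (Disjoint on f)) (h : ∀ i, Commute U (E.proj (f i))) :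
    Commute U (E.proj (⋃ i, f i)) :=
  commute_of_tendsto_inner_apply_self (T := fun n => ∑ i ∈ Finset.range n, E.proj (f i))
    (fun n => Commute.sum_right _ _ _ fun i _ => h i) fun z => by
      simpa [sum_inner] using (E.hasSum_inner_proj_apply_self hm hd z).tendsto_sum_nat

section LayerCake

variable {g : S → ℝ} (hg : Measurable g) (C : ℝ)
include hg

theorem measurable_inner_proj_superlevel (x y : H) :
    Measurable fun t : ℝ => inner ℂ (E.proj {s | t < g s} x) y := by
  have hq : ∀ z, Measurable fun t : ℝ => inner ℂ (E.proj {s | t < g s} z) z := fun z => by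
    simp_rw [E.inner_proj_apply_self (measurableSet_lt measurable_const hg)]
    exact Complex.measurable_ofReal.comp
      (Antitone.measurable fun a b hab => measureReal_mono fun s hs => hab.trans_lt hs)
  have hpol := fun t : ℝ => inner_map_polarization' (E.proj {s | t < g s} : H →ₗ[ℂ] H) x y
  simp only [ContinuousLinearMap.coe_coe] at hpol
  simp_rw [hpol]
  exact ((((hq _).sub (hq _)).sub ((hq _).const_mul _)).add ((hq _).const_mul _)).div_const _

theorem integrableOn_inner_proj_superlevel (x y : H) :
    IntegrableOn (fun t : ℝ => inner ℂ (E.proj {s | t < g s} x) y) (Ioc 0 C) :=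
  Measure.integrableOn_of_bounded (M := ‖x‖ * ‖y‖) measure_Ioc_lt_top.ne
    (E.measurable_inner_proj_superlevel hg x y).aestronglyMeasurable
    (ae_of_all _ fun _ => E.norm_inner_proj_apply_le (measurableSet_lt measurable_const hg) x y)

/- The integral `∫₀^C E{g > t} dt` is taken weakly: `t ↦ E{g > t}` is in general not Bochner
measurable in the operator norm. -/
noncomputable def layerCakeForm : H →L⋆[ℂ] H →L[ℂ] ℂ :=
  LinearMap.mkContinuous₂
    (LinearMap.mk₂'ₛₗ (starRingEnd ℂ) (RingHom.id ℂ)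
      (fun x y => ∫ t in Ioc 0 C, inner ℂ (E.proj {s | t < g s} x) y)
      (fun x x' y => by
        simp only [_root_.map_add, inner_add_left]
        exact integral_add (E.integrableOn_inner_proj_superlevel hg C x y)
          (E.integrableOn_inner_proj_superlevel hg C x' y))
      (fun c x y => by
        simp only [_root_.map_smul, inner_smul_left]
        exact integral_const_mul _ _)
      (fun x y y' => by
        simp only [inner_add_right]
        exact integral_add (E.integrableOn_inner_proj_superlevel hg C x y)
          (E.integrableOn_inner_proj_superlevel hg C x y'))
      (fun c x y => by
        simp only [inner_smul_right]
        exact integral_const_mul _ _))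
    (volume.real (Ioc 0 C)) fun x y => by
      rw [mul_assoc, mul_comm]
      exact norm_setIntegral_le_of_norm_le_const measure_Ioc_lt_top
        fun _ _ => E.norm_inner_proj_apply_le (measurableSet_lt measurable_const hg) x y

noncomputable def layerCakeIntegral : H →L[ℂ] H :=
  InnerProductSpace.continuousLinearMapOfBilin (E.layerCakeForm hg C)

theorem inner_layerCakeIntegral_apply (x y : H) :
    inner ℂ (E.layerCakeIntegral hg C x) y =
      ∫ t in Ioc 0 C, inner ℂ (E.proj {s | t < g s} x) y := by
  simp [layerCakeIntegral, layerCakeForm]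

theorem inner_layerCakeIntegral_apply_self (hg0 : ∀ s, 0 ≤ g s) (hgC : ∀ s, g s ≤ C) (ψ : H) :
    inner ℂ (E.layerCakeIntegral hg C ψ) ψ = ((∫ s, g s ∂E.meas ψ : ℝ) : ℂ) := by
  have hint : Integrable g (E.meas ψ) := .of_bound hg.aestronglyMeasurable C
    (ae_of_all _ fun s => by rw [Real.norm_of_nonneg (hg0 s)]; exact hgC s)
  rw [E.inner_layerCakeIntegral_apply, hint.integral_eq_integral_meas_lt (ae_of_all _ hg0)]
  simp_rw [E.inner_proj_apply_self (measurableSet_lt measurable_const hg)]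
  rw [integral_complex_ofReal]
  congr 1
  refine (setIntegral_eq_of_subset_of_forall_sdiff_eq_zero measurableSet_Ioi
    Ioc_subset_Ioi_self fun t ht => ?_).symm
  have hempty : {s | t < g s} = ∅ :=
    eq_empty_of_forall_notMem fun s hs => ht.2 ⟨ht.1, (hgC s).trans' hs.le⟩
  simp [hempty]

theorem isSpectralIntegralOf_layerCakeIntegral (hg0 : ∀ s, 0 ≤ g s) (hgC : ∀ s, g s ≤ C) :
    IsSpectralIntegralOf E (fun s => (g s : ℂ))
      ((E.layerCakeIntegral hg C : H →ₗ[ℂ] H).toPMap ⊤) := by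
  refine ⟨fun ψ => iff_of_true trivial ?_, fun ψ => ?_⟩
  · refine .of_bound (by fun_prop) (C ^ 2) (ae_of_all _ fun s => ?_)
    simp only [Complex.norm_real, norm_pow, Real.norm_of_nonneg (hg0 s)]
    exact pow_le_pow_left₀ (hg0 s) (hgC s) 2
  · rw [integral_complex_ofReal, ← inner_conj_symm]
    change starRingEnd ℂ (inner ℂ (E.layerCakeIntegral hg C ψ) ψ) = _
    rw [E.inner_layerCakeIntegral_apply_self hg C hg0 hgC, Complex.conj_ofReal]

end LayerCake

theorem commute_proj_of_isClosed [TopologicalSpace S] [HasOuterApproxClosed S]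
    [OpensMeasurableSpace S] {U : H →L[ℂ] H}
    (hU : ∀ g : S → ℝ, ∀ hg : Continuous g, (∀ s, 0 ≤ g s) → (∀ s, g s ≤ 1) →
      Commute U (E.layerCakeIntegral hg.measurable 1))
    {F : Set S} (hF : IsClosed F) : Commute U (E.proj F) := by
  have happr (n : ℕ) : Continuous fun s => (hF.apprSeq n s : ℝ) :=
    NNReal.continuous_coe.comp (hF.apprSeq n).continuous
  have happr_le (n : ℕ) (s : S) : (hF.apprSeq n s : ℝ) ≤ 1 :=
    NNReal.coe_le_one.mpr (HasOuterApproxClosed.apprSeq_apply_le_one hF n s)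
  refine commute_of_tendsto_inner_apply_self (l := atTop)
    (fun n => hU _ (happr n) (fun s => (hF.apprSeq n s).2) (happr_le n)) fun z => ?_
  have hT (n : ℕ) := E.inner_layerCakeIntegral_apply_self (happr n).measurable 1
    (fun s => (hF.apprSeq n s).2) (happr_le n) z
  simp only [hT, E.inner_proj_apply_self hF.measurableSet]
  exact (Complex.continuous_ofReal.tendsto _).comp
    (HasOuterApproxClosed.tendsto_integral_apprSeq hF _)

end SpectralMeasure

/-- If a bounded operator `U` commutes with the spectral integral `J^E_f` for every
continuous complex function `f` on a Polish space `S`, then `U` commutes with every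
spectral projection `E(A)`, `A` Borel. -/
theorem commutes_with_spectral_projections
    {S : Type*} [TopologicalSpace S] [PolishSpace S] [MeasurableSpace S] [BorelSpace S]
    (E : SpectralMeasure S H) (U : H →L[ℂ] H)
    (hU : ∀ f : S → ℂ, Continuous f → ∀ T : H →ₗ.[ℂ] H,
      IsSpectralIntegralOf E f T → CommutesWith U T) :
    ∀ A : Set S, MeasurableSet A → U * E.proj A = E.proj A * U := by
  have hclosed {F : Set S} (hF : IsClosed F) : Commute U (E.proj F) :=
    E.commute_proj_of_isClosed (fun g hg hg0 hg1 => commute_of_commutesWith_toPMap <|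
      hU _ (by fun_prop) _ (E.isSpectralIntegralOf_layerCakeIntegral hg.measurable 1 hg0 hg1)) hF
  intro A hA
  change Commute U (E.proj A)
  induction A, hA using MeasurableSet.induction_on_open with
  | isOpen V hV =>
    simpa using E.commute_proj_compl hV.isClosed_compl.measurableSet (hclosed hV.isClosed_compl)
  | compl A hA h => exact E.commute_proj_compl hA h
  | iUnion f hd hm h => exact E.commute_proj_iUnion hm hd h
end

section
/- Let ν and λ be σ-finite measures on S and on an interval (a,b) respectively, and let v be a (ν×λ)-measurable real function on S×(a,b) such that v(s,·) is locally square-integrable for ν-a.e. s. Suppose f(s,x) is a function such that for ν-a.e. s, x ↦ f(s,x) is twice (absolutely continuously) differentiable and solves −∂ₓ²f(s,x) + v(s,x) f(s,x) = 0, and suppose there is x₀ ∈ (a,b) such that s ↦ f(s,x₀) and s ↦ ∂ₓf(s,x₀) are ν-measurable. Then f is (ν×λ)-measurable on S×(a,b). -/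
/-!
For a.e. `s`, the pair `(f(s,·), ∂ₓf(s,·))` solves the linear system `Y' = (Y₂, v Y₁)`, so it is
the pointwise limit of its Picard iterates started at `x₀`: after `n` steps the error is at most
`C |∫_{x₀}^x (1 + |v(s,·)|)|ⁿ / n!`. With `v` and the initial data replaced by measurable
versions, the iterates are jointly measurable in `(s, x)`; hence every section `s ↦ f(s,x)` is
measurable. As `f(s,·)` is moreover continuous for a.e. `s`, `f` is a Carathéodory function and
therefore jointly measurable.
-/

open MeasureTheory Set Filter Topology
open scoped Interval Nat

theorem AbsolutelyContinuousOnInterval.pow {f : ℝ → ℝ} {a b : ℝ}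
    (hf : AbsolutelyContinuousOnInterval f a b) (n : ℕ) :
    AbsolutelyContinuousOnInterval (fun x => f x ^ n) a b := by
  induction n with
  | zero =>
    simpa using (LipschitzWith.const (1 : ℝ)).lipschitzOnWith.absolutelyContinuousOnInterval
  | succ n ih => simpa only [pow_succ] using ih.fun_mul hf

theorem integral_mul_pow_primitive {m : ℝ → ℝ} {a b : ℝ}
    (hm : IntervalIntegrable m volume a b) (n : ℕ) :
    ∫ t in a..b, m t * (∫ u in a..t, m u) ^ n = (∫ u in a..b, m u) ^ (n + 1) / (n + 1) := by
  let A : ℝ → ℝ := fun t => ∫ u in a..t, m u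
  have hA : AbsolutelyContinuousOnInterval (fun t => A t ^ (n + 1) / (n + 1)) a b := by
    simpa [div_eq_inv_mul] using ((hm.absolutelyContinuousOnInterval_intervalIntegral
      left_mem_uIcc).pow (n + 1)).const_mul ((n + 1 : ℝ)⁻¹)
  have hderiv : ∀ᵐ t, t ∈ Ι a b →
      m t * A t ^ n = deriv (fun t => A t ^ (n + 1) / (n + 1)) t := by
    filter_upwards [hm.ae_hasDerivAt_integral] with t ht htI
    rw [(((ht (uIoc_subset_uIcc htI) a left_mem_uIcc).fun_pow (n + 1)).div_const
      ((n : ℝ) + 1)).deriv]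
    field_simp
    push_cast
    ring
  change ∫ t in a..b, m t * A t ^ n = A b ^ (n + 1) / (n + 1)
  rw [intervalIntegral.integral_congr_ae hderiv, hA.integral_deriv_eq_sub]
  simp [A]

theorem setIntegral_uIoc_mul_abs_pow_primitive {m : ℝ → ℝ} {a b : ℝ} (hm₀ : ∀ t, 0 ≤ m t)
    (hm : IntervalIntegrable m volume a b) (n : ℕ) :
    ∫ t in Ι a b, m t * |∫ u in a..t, m u| ^ n = |∫ u in a..b, m u| ^ (n + 1) / (n + 1) := by
  -- `ε = ±1` is the orientation of `a..b`.
  obtain ⟨ε, hsign, horient⟩ : ∃ ε : ℝ,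
      (∀ t ∈ [[a, b]], |∫ u in a..t, m u| = ε * ∫ u in a..t, m u) ∧
      ∀ g : ℝ → ℝ, ∫ t in Ι a b, g t = ε * ∫ t in a..b, g t := by
    rcases le_total a b with hab | hba
    · refine ⟨1, fun t ht => ?_, fun g => ?_⟩
      · rw [uIcc_of_le hab] at ht
        rw [one_mul, abs_of_nonneg (intervalIntegral.integral_nonneg ht.1 fun u _ => hm₀ u)]
      · rw [uIoc_of_le hab, intervalIntegral.integral_of_le hab, one_mul]
    · refine ⟨-1, fun t ht => ?_, fun g => ?_⟩
      · rw [uIcc_of_ge hba] at ht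
        rw [intervalIntegral.integral_symm, abs_neg, neg_one_mul, neg_neg,
          abs_of_nonneg (intervalIntegral.integral_nonneg ht.2 fun u _ => hm₀ u)]
      · rw [uIoc_of_ge hba, intervalIntegral.integral_of_ge hba, neg_one_mul, neg_neg]
  calc ∫ t in Ι a b, m t * |∫ u in a..t, m u| ^ n
      = ∫ t in Ι a b, ε ^ n * (m t * (∫ u in a..t, m u) ^ n) := by
        refine setIntegral_congr_fun measurableSet_uIoc fun t ht => ?_
        rw [hsign t (uIoc_subset_uIcc ht)]
        ring
    _ = (ε * ∫ u in a..b, m u) ^ (n + 1) / (n + 1) := by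
        rw [integral_const_mul, horient, integral_mul_pow_primitive hm]
        ring
    _ = |∫ u in a..b, m u| ^ (n + 1) / (n + 1) := by rw [hsign b right_mem_uIcc]

theorem le_mul_pow_div_factorial_of_le_setIntegral_uIoc {m : ℝ → ℝ} {e : ℕ → ℝ → ℝ}
    {x₀ x₁ C : ℝ} (hm₀ : ∀ t, 0 ≤ m t) (hm : IntervalIntegrable m volume x₀ x₁)
    (he₀ : ∀ n t, 0 ≤ e n t) (hC : ∀ y ∈ [[x₀, x₁]], e 0 y ≤ C)
    (hstep : ∀ n, ∀ y ∈ [[x₀, x₁]], e (n + 1) y ≤ ∫ t in Ι x₀ y, m t * e n t) (n : ℕ) :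
    ∀ y ∈ [[x₀, x₁]], e n y ≤ C * |∫ u in x₀..y, m u| ^ n / n ! := by
  induction n with
  | zero => simpa using hC
  | succ n ih =>
    intro y hy
    have hsub : [[x₀, y]] ⊆ [[x₀, x₁]] := uIcc_subset_uIcc left_mem_uIcc hy
    have hmy : IntervalIntegrable m volume x₀ y := hm.mono_set hsub
    have hbound : IntegrableOn (fun t => C / n ! * (m t * |∫ u in x₀..t, m u| ^ n)) (Ι x₀ y) :=
      (hmy.mul_continuousOn ((hmy.absolutelyContinuousOnInterval_intervalIntegral
        left_mem_uIcc).continuousOn.abs.pow n)).def'.const_mul _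
    calc e (n + 1) y ≤ ∫ t in Ι x₀ y, m t * e n t := hstep n y hy
      _ ≤ ∫ t in Ι x₀ y, C / n ! * (m t * |∫ u in x₀..t, m u| ^ n) := by
        refine integral_mono_of_nonneg (.of_forall fun t => mul_nonneg (hm₀ t) (he₀ n t))
          hbound ?_
        filter_upwards [ae_restrict_mem measurableSet_uIoc] with t ht
        exact (mul_le_mul_of_nonneg_left (ih t (hsub (uIoc_subset_uIcc ht))) (hm₀ t)).trans_eq
          (by ring)
      _ = C * |∫ u in x₀..y, m u| ^ (n + 1) / (n + 1) ! := by
        rw [integral_const_mul, setIntegral_uIoc_mul_abs_pow_primitive hm₀ hmy,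
          Nat.factorial_succ]
        push_cast
        field_simp

theorem intervalIntegral.integral_pair {E F : Type*} [NormedAddCommGroup E] [NormedSpace ℝ E]
    [CompleteSpace E] [NormedAddCommGroup F] [NormedSpace ℝ F] [CompleteSpace F]
    {f : ℝ → E} {g : ℝ → F} {a b : ℝ} (hf : IntervalIntegrable f volume a b)
    (hg : IntervalIntegrable g volume a b) :
    ∫ t in a..b, (f t, g t) = (∫ t in a..b, f t, ∫ t in a..b, g t) := by
  simp only [intervalIntegral, _root_.integral_pair hf.1 hg.1,
    _root_.integral_pair hf.2 hg.2, Prod.mk_sub_mk]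

theorem IntervalIntegrable.ofReal {f : ℝ → ℝ} {a b : ℝ} (hf : IntervalIntegrable f volume a b) :
    IntervalIntegrable (fun t => (f t : ℂ)) volume a b :=
  ⟨hf.1.ofReal, hf.2.ofReal⟩

/-- `f'' = V f` as the first-order system `(f, f')' = (f', V f)`. -/
def schrodingerField (V : ℝ → ℝ) (t : ℝ) (y : ℂ × ℂ) : ℂ × ℂ := (y.2, (V t : ℂ) * y.1)

theorem schrodingerField_sub (V : ℝ → ℝ) (t : ℝ) (y z : ℂ × ℂ) :
    schrodingerField V t y - schrodingerField V t z = schrodingerField V t (y - z) := by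
  simp [schrodingerField, mul_sub]

theorem norm_schrodingerField_le (V : ℝ → ℝ) (t : ℝ) (y : ℂ × ℂ) :
    ‖schrodingerField V t y‖ ≤ (1 + |V t|) * ‖y‖ := by
  have h₁ : ‖y.1‖ ≤ ‖y‖ := norm_fst_le y
  have h₂ : ‖y.2‖ ≤ ‖y‖ := norm_snd_le y
  rw [schrodingerField, Prod.norm_mk, norm_mul, Complex.norm_real, Real.norm_eq_abs]
  refine max_le ?_ ?_ <;> nlinarith [abs_nonneg (V t), norm_nonneg y]

theorem IntervalIntegrable.schrodingerField {V : ℝ → ℝ} {Y : ℝ → ℂ × ℂ} {a b : ℝ}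
    (hV : IntervalIntegrable V volume a b) (hY : ContinuousOn Y [[a, b]]) :
    IntervalIntegrable (fun t => schrodingerField V t (Y t)) volume a b := by
  have h₁ : IntervalIntegrable (fun t => (Y t).2) volume a b :=
    (continuous_snd.comp_continuousOn hY).intervalIntegrable
  have h₂ : IntervalIntegrable (fun t => (V t : ℂ) * (Y t).1) volume a b :=
    hV.ofReal.mul_continuousOn (continuous_fst.comp_continuousOn hY)
  exact ⟨h₁.1.prodMk h₂.1, h₁.2.prodMk h₂.2⟩

noncomputable def picardIterate (V : ℝ → ℝ) (x₀ : ℝ) (y₀ : ℂ × ℂ) : ℕ → ℝ → ℂ × ℂ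
  | 0 => fun _ => y₀
  | n + 1 => fun x => y₀ + ∫ t in x₀..x, schrodingerField V t (picardIterate V x₀ y₀ n t)

theorem continuousOn_picardIterate {V : ℝ → ℝ} {x₀ x₁ : ℝ}
    (hV : IntervalIntegrable V volume x₀ x₁) (y₀ : ℂ × ℂ) (n : ℕ) :
    ContinuousOn (picardIterate V x₀ y₀ n) [[x₀, x₁]] := by
  induction n with
  | zero => exact continuousOn_const
  | succ n ih =>
    exact continuousOn_const.add (intervalIntegral.continuousOn_primitive_interval
      ((intervalIntegrable_iff').mp (hV.schrodingerField ih)))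

theorem tendsto_picardIterate {V : ℝ → ℝ} {Y : ℝ → ℂ × ℂ} {x₀ x₁ : ℝ}
    (hV : IntervalIntegrable V volume x₀ x₁) (hYc : ContinuousOn Y [[x₀, x₁]])
    (hY : ∀ y ∈ [[x₀, x₁]], Y y = Y x₀ + ∫ t in x₀..y, schrodingerField V t (Y t)) :
    Tendsto (fun n => picardIterate V x₀ (Y x₀) n x₁) atTop (𝓝 (Y x₁)) := by
  set P := picardIterate V x₀ (Y x₀)
  obtain ⟨C, hC⟩ := isCompact_uIcc.exists_bound_of_continuousOn
    (f := fun y => Y y - Y x₀) (hYc.sub continuousOn_const)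
  have hm : IntervalIntegrable (fun t => 1 + |V t|) volume x₀ x₁ :=
    intervalIntegrable_const.add hV.abs
  have hstep : ∀ n, ∀ y ∈ [[x₀, x₁]], ‖Y y - P (n + 1) y‖
      ≤ ∫ t in Ι x₀ y, (1 + |V t|) * ‖Y t - P n t‖ := by
    intro n y hy
    have hsub : [[x₀, y]] ⊆ [[x₀, x₁]] := uIcc_subset_uIcc left_mem_uIcc hy
    have hdiff : Y y - P (n + 1) y
        = ∫ t in x₀..y, schrodingerField V t (Y t - P n t) := by
      rw [hY y hy, show P (n + 1) y = Y x₀ + ∫ t in x₀..y, schrodingerField V t (P n t) from rfl,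
        add_sub_add_left_eq_sub, ← intervalIntegral.integral_sub
          ((hV.mono_set hsub).schrodingerField (hYc.mono hsub))
          ((hV.mono_set hsub).schrodingerField ((continuousOn_picardIterate hV _ n).mono hsub))]
      simp only [P, schrodingerField_sub]
    rw [hdiff]
    refine (intervalIntegral.norm_integral_le_integral_norm_uIoc).trans
      (integral_mono_of_nonneg (.of_forall fun t => norm_nonneg _) ?_
        (.of_forall fun t => norm_schrodingerField_le V t _))
    exact ((hm.mono_set hsub).mul_continuousOn
      ((hYc.sub (continuousOn_picardIterate hV _ n)).norm.mono hsub)).def'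
  have hbound := le_mul_pow_div_factorial_of_le_setIntegral_uIoc (fun t => by positivity) hm
    (fun n t => norm_nonneg (Y t - P n t)) (fun y hy => by simpa [P, picardIterate] using hC y hy)
    hstep
  refine tendsto_iff_norm_sub_tendsto_zero.mpr (squeeze_zero (fun n => norm_nonneg _)
    (fun n => (norm_sub_rev _ _).trans_le (hbound n x₁ right_mem_uIcc)) ?_)
  simpa using FloorSemiring.tendsto_mul_pow_div_factorial_sub_atTop C
    |∫ u in x₀..x₁, (1 + |V u|)| 0

theorem tendsto_picardIterate_of_hasDerivAt {V : ℝ → ℝ} {F G : ℝ → ℂ} {x₀ x₁ : ℝ}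
    (hV : IntervalIntegrable V volume x₀ x₁) (hF : ∀ x ∈ [[x₀, x₁]], HasDerivAt F (G x) x)
    (hG : ∀ x ∈ [[x₀, x₁]], G x = G x₀ + ∫ t in x₀..x, (V t : ℂ) * F t) :
    Tendsto (fun n => (picardIterate V x₀ (F x₀, G x₀) n x₁).1) atTop (𝓝 (F x₁)) := by
  have hFc : ContinuousOn F [[x₀, x₁]] := fun x hx => (hF x hx).continuousAt.continuousWithinAt
  have hVF : IntervalIntegrable (fun t => (V t : ℂ) * F t) volume x₀ x₁ :=
    hV.ofReal.mul_continuousOn hFc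
  have hGc : ContinuousOn G [[x₀, x₁]] :=
    (continuousOn_const.add (intervalIntegral.continuousOn_primitive_interval
      ((intervalIntegrable_iff').mp hVF))).congr hG
  refine (continuous_fst.tendsto _).comp (tendsto_picardIterate (Y := fun x => (F x, G x)) hV
    (hFc.prodMk hGc) fun x hx => ?_)
  have hsub : [[x₀, x]] ⊆ [[x₀, x₁]] := uIcc_subset_uIcc left_mem_uIcc hx
  rw [show (fun t => schrodingerField V t (F t, G t)) = fun t => (G t, (V t : ℂ) * F t) from rfl,
    intervalIntegral.integral_pair ((hGc.mono hsub).intervalIntegrable) (hVF.mono_set hsub),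
    intervalIntegral.integral_eq_sub_of_hasDerivAt (fun t ht => hF t (hsub ht))
      (hGc.mono hsub).intervalIntegrable, Prod.mk_add_mk, add_sub_cancel, ← hG x hx]

theorem MeasureTheory.StronglyMeasurable.setIntegral_Ioc_prod {X E : Type*} [MeasurableSpace X]
    [NormedAddCommGroup E] [NormedSpace ℝ E] {g : X × ℝ → E} (hg : StronglyMeasurable g)
    {lo hi : X → ℝ} (hlo : Measurable lo) (hhi : Measurable hi) :
    StronglyMeasurable fun x => ∫ t in Ioc (lo x) (hi x), g (x, t) := by
  have hT : MeasurableSet {q : X × ℝ | q.2 ∈ Ioc (lo q.1) (hi q.1)} :=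
    (_root_.measurableSet_lt (hlo.comp measurable_fst) measurable_snd).inter
      (_root_.measurableSet_le measurable_snd (hhi.comp measurable_fst))
  convert (hg.indicator hT).integral_prod_right' (ν := volume) using 2 with x
  rw [← integral_indicator measurableSet_Ioc]
  rfl

theorem MeasureTheory.StronglyMeasurable.intervalIntegral_prod {X E : Type*} [MeasurableSpace X]
    [NormedAddCommGroup E] [NormedSpace ℝ E] {g : X × ℝ → E} (hg : StronglyMeasurable g)
    {lo hi : X → ℝ} (hlo : Measurable lo) (hhi : Measurable hi) :
    StronglyMeasurable fun x => ∫ t in lo x..hi x, g (x, t) :=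
  (hg.setIntegral_Ioc_prod hlo hhi).sub (hg.setIntegral_Ioc_prod hhi hlo)

theorem stronglyMeasurable_picardIterate {S : Type*} [MeasurableSpace S] {W : S × ℝ → ℝ}
    {Y₀ : S → ℂ × ℂ} (hW : StronglyMeasurable W) (hY₀ : StronglyMeasurable Y₀) (x₀ : ℝ)
    (n : ℕ) :
    StronglyMeasurable fun p : S × ℝ => picardIterate (fun t => W (p.1, t)) x₀ (Y₀ p.1) n p.2 := by
  induction n with
  | zero => exact hY₀.comp_measurable measurable_fst
  | succ n ih =>
    have hfield : StronglyMeasurable fun p : S × ℝ => schrodingerField (fun t => W (p.1, t)) p.2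
        (picardIterate (fun t => W (p.1, t)) x₀ (Y₀ p.1) n p.2) :=
      (continuous_snd.comp_stronglyMeasurable ih).prodMk
        ((Complex.continuous_ofReal.comp_stronglyMeasurable hW).mul
          (continuous_fst.comp_stronglyMeasurable ih))
    exact (hY₀.comp_measurable measurable_fst).add
      ((hfield.comp_measurable (measurable_fst.fst.prodMk measurable_snd)).intervalIntegral_prod
        measurable_const measurable_snd)

theorem exists_continuous_stronglyMeasurable_ae_eq {ι S E : Type*} [TopologicalSpace ι]
    [TopologicalSpace.SeparableSpace ι] [FrechetUrysohnSpace ι] [MeasurableSpace S]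
    {μ : Measure S} [TopologicalSpace E] [TopologicalSpace.PseudoMetrizableSpace E] [Nonempty E]
    {u : ι → S → E} (hcont : ∀ᵐ s ∂μ, Continuous fun i => u i s)
    (hmeas : ∀ i, AEStronglyMeasurable (u i) μ) :
    ∃ w : ι → S → E, (∀ s, Continuous fun i => w i s) ∧ (∀ i, StronglyMeasurable (w i)) ∧
      ∀ᵐ s ∂μ, ∀ i, w i s = u i s := by
  classical
  obtain ⟨D, hDc, hD⟩ := TopologicalSpace.exists_countable_dense ι
  have hgood : ∀ᵐ s ∂μ, (Continuous fun i => u i s) ∧ ∀ d ∈ D, u d s = (hmeas d).mk _ s :=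
    hcont.and ((ae_ball_iff hDc).mpr fun d _ => (hmeas d).ae_eq_mk)
  set N := toMeasurable μ
    {s | ¬((Continuous fun i => u i s) ∧ ∀ d ∈ D, u d s = (hmeas d).mk _ s)}
  have hgood_of_notMem : ∀ s ∉ N,
      (Continuous fun i => u i s) ∧ ∀ d ∈ D, u d s = (hmeas d).mk _ s := fun s hs =>
    not_not.mp fun h => hs (subset_toMeasurable _ _ h)
  have hN : ∀ᵐ s ∂μ, s ∉ N := measure_eq_zero_iff_ae_notMem.mp
    (by rw [measure_toMeasurable]; exact ae_iff.mp hgood)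
  let w : ι → S → E := fun i => N.piecewise (fun _ => Classical.arbitrary E) (u i)
  have hwc : ∀ s, Continuous fun i => w i s := by
    intro s
    by_cases hs : s ∈ N
    · simpa [w, hs] using continuous_const
    · simpa [w, hs] using (hgood_of_notMem s hs).1
  have hwD : ∀ d ∈ D, StronglyMeasurable (w d) := by
    intro d hd
    have : w d = N.piecewise (fun _ => Classical.arbitrary E) ((hmeas d).mk _) := by
      ext s
      by_cases hs : s ∈ N
      · simp [w, hs]
      · simp [w, hs, (hgood_of_notMem s hs).2 d hd]
    rw [this]
    exact stronglyMeasurable_const.piecewise (measurableSet_toMeasurable _ _)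
      (hmeas d).stronglyMeasurable_mk
  refine ⟨w, hwc, fun i => ?_, hN.mono fun s hs i => by simp [w, hs]⟩
  obtain ⟨d, hdD, hdi⟩ := mem_closure_iff_seq_limit.mp (hD.closure_eq ▸ mem_univ i)
  exact stronglyMeasurable_of_tendsto atTop (fun k => hwD _ (hdD k))
    (tendsto_pi_nhds.mpr fun s => ((hwc s).tendsto i).comp hdi)

theorem aestronglyMeasurable_prod_restrict_of_ae_continuousOn {S X E : Type*}
    [MeasurableSpace S] {μ : Measure S} [TopologicalSpace X] [TopologicalSpace.MetrizableSpace X]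
    [SecondCountableTopology X] [MeasurableSpace X] [OpensMeasurableSpace X] {ρ : Measure X}
    [TopologicalSpace E] [TopologicalSpace.PseudoMetrizableSpace E] [Nonempty E]
    {U : Set X} (hU : MeasurableSet U) {f : S × X → E}
    (hcont : ∀ᵐ s ∂μ, ContinuousOn (fun x => f (s, x)) U)
    (hmeas : ∀ x ∈ U, AEStronglyMeasurable (fun s => f (s, x)) μ) :
    AEStronglyMeasurable f (μ.prod (ρ.restrict U)) := by
  classical
  rcases U.eq_empty_or_nonempty with rfl | ⟨x₀, hx₀⟩
  · simp
  obtain ⟨w, hwc, hwm, hwf⟩ := exists_continuous_stronglyMeasurable_ae_eq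
    (u := fun (x : U) s => f (s, x)) (hcont.mono fun s hs => hs.domRestrict) fun x => hmeas x x.2
  let proj : X → U := fun x => if h : x ∈ U then ⟨x, h⟩ else ⟨x₀, hx₀⟩
  have hproj : Measurable proj := measurable_id.dite measurable_const hU
  refine ⟨fun p => Function.uncurry w (proj p.2, p.1),
    (stronglyMeasurable_uncurry_of_continuous_of_stronglyMeasurable hwc hwm).comp_measurable
      ((hproj.comp measurable_snd).prodMk measurable_fst), ?_⟩
  filter_upwards [Measure.quasiMeasurePreserving_fst.ae hwf,
    Measure.quasiMeasurePreserving_snd.ae (ae_restrict_mem hU)] with p hwp hp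
  simp [proj, hp, hwp]

theorem tendsto_picardIterate_of_ae_eq {v V : ℝ → ℝ} {F G : ℝ → ℂ} {a b x₀ x₁ : ℝ}
    (hx₀ : x₀ ∈ Ioo a b) (hx₁ : x₁ ∈ Ioo a b) (hV : Measurable V)
    (hvV : ∀ᵐ t ∂volume.restrict (Ioo a b), v t = V t)
    (hv : ∀ c d : ℝ, a < c → c ≤ d → d < b → IntegrableOn (fun x => v x ^ 2) (Icc c d))
    (hF : ∀ x ∈ Ioo a b, HasDerivAt F (G x) x)
    (hG : ∀ x ∈ Ioo a b, G x = G x₀ + ∫ t in x₀..x, (v t : ℂ) * F t) :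
    Tendsto (fun n => (picardIterate V x₀ (F x₀, G x₀) n x₁).1) atTop (𝓝 (F x₁)) := by
  have hsub : [[x₀, x₁]] ⊆ Ioo a b := ordConnected_Ioo.uIcc_subset hx₀ hx₁
  have hvV' : ∀ᵐ t, t ∈ Ioo a b → v t = V t := (ae_restrict_iff' measurableSet_Ioo).mp hvV
  have hV2 : IntegrableOn (fun x => V x ^ 2) (Icc (min x₀ x₁) (max x₀ x₁)) :=
    (hv _ _ (lt_min hx₀.1 hx₁.1) min_le_max (max_lt hx₀.2 hx₁.2)).congr_fun_ae
      ((ae_restrict_iff' measurableSet_Icc).mpr (hvV'.mono fun t ht htI => by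
        simp only [ht (hsub htI)]))
  have hVint : IntervalIntegrable V volume x₀ x₁ :=
    IntegrableOn.intervalIntegrable (((memLp_two_iff_integrable_sq
      hV.aestronglyMeasurable).mpr hV2).integrable one_le_two)
  refine tendsto_picardIterate_of_hasDerivAt hVint (fun x hx => hF x (hsub hx)) fun x hx => ?_
  rw [hG x (hsub hx)]
  congr 1
  refine intervalIntegral.integral_congr_ae (hvV'.mono fun t ht htI => ?_)
  rw [ht ((uIoc_subset_uIcc.trans ((uIcc_subset_uIcc left_mem_uIcc hx).trans hsub)) htI)]

theorem solution_family_jointly_measurable_general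
    {S : Type*} [MeasurableSpace S] (ν : Measure S)
    (a b x₀ : ℝ) (hx₀ : x₀ ∈ Ioo a b)
    (v : S × ℝ → ℝ)
    (hv : AEStronglyMeasurable v (ν.prod (volume.restrict (Ioo a b))))
    (hvloc : ∀ᵐ s ∂ν, ∀ c d : ℝ, a < c → c ≤ d → d < b →
      IntegrableOn (fun x => (v (s, x)) ^ 2) (Icc c d))
    (f f' : S × ℝ → ℂ)
    (hode : ∀ᵐ s ∂ν,
      (∀ x ∈ Ioo a b, HasDerivAt (fun y => f (s, y)) (f' (s, x)) x) ∧
      (∀ x ∈ Ioo a b, f' (s, x) = f' (s, x₀) + ∫ t in x₀..x, (v (s, t) : ℂ) * f (s, t)))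
    (hmeas0 : AEMeasurable (fun s => f (s, x₀)) ν)
    (hmeas1 : AEMeasurable (fun s => f' (s, x₀)) ν) :
    AEStronglyMeasurable f (ν.prod (volume.restrict (Ioo a b))) := by
  obtain ⟨F₀, hF₀, hfF₀⟩ := hmeas0
  obtain ⟨F₁, hF₁, hfF₁⟩ := hmeas1
  have hvV : ∀ᵐ s ∂ν, ∀ᵐ t ∂volume.restrict (Ioo a b), v (s, t) = hv.mk v (s, t) :=
    Measure.ae_ae_of_ae_prod hv.ae_eq_mk
  refine aestronglyMeasurable_prod_restrict_of_ae_continuousOn measurableSet_Ioo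
    (hode.mono fun s hs x hx => (hs.1 x hx).continuousAt.continuousWithinAt) fun x₁ hx₁ => ?_
  have hP : ∀ n, StronglyMeasurable fun s =>
      (picardIterate (fun t => hv.mk v (s, t)) x₀ (F₀ s, F₁ s) n x₁).1 := fun n =>
    (continuous_fst.comp_stronglyMeasurable (stronglyMeasurable_picardIterate
      hv.stronglyMeasurable_mk (hF₀.prodMk hF₁).stronglyMeasurable x₀ n)).comp_measurable
        (measurable_id.prodMk measurable_const)
  refine aestronglyMeasurable_of_tendsto_ae atTop (fun n => (hP n).aestronglyMeasurable) ?_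
  filter_upwards [hode, hvloc, hvV, hfF₀, hfF₁] with s hs hvs hvVs h₀ h₁
  rw [← h₀, ← h₁]
  exact tendsto_picardIterate_of_ae_eq hx₀ hx₁
    (hv.stronglyMeasurable_mk.measurable.comp measurable_prodMk_left) hvVs hvs hs.1 hs.2

/-- A family of solutions `f(s,·)` of the Schrödinger equation `f'' = v f` on `(a,b)`,
with jointly measurable potential `v` and measurable initial data at some `x₀`, is
jointly measurable. -/
theorem solution_family_jointly_measurable
    {S : Type*} [MeasurableSpace S] (ν : Measure S) [SigmaFinite ν]
    (a b x₀ : ℝ) (hx₀ : x₀ ∈ Ioo a b)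
    (v : S × ℝ → ℝ)
    (hv : AEStronglyMeasurable v (ν.prod (volume.restrict (Ioo a b))))
    (hvloc : ∀ᵐ s ∂ν, ∀ c d : ℝ, a < c → c ≤ d → d < b →
      IntegrableOn (fun x => (v (s, x)) ^ 2) (Icc c d))
    (f f' : S × ℝ → ℂ)
    (hode : ∀ᵐ s ∂ν,
      (∀ x ∈ Ioo a b, HasDerivAt (fun y => f (s, y)) (f' (s, x)) x) ∧
      (∀ x ∈ Ioo a b, f' (s, x) = f' (s, x₀) + ∫ t in x₀..x, (v (s, t) : ℂ) * f (s, t)))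
    (hmeas0 : AEMeasurable (fun s => f (s, x₀)) ν)
    (hmeas1 : AEMeasurable (fun s => f' (s, x₀)) ν) :
    AEStronglyMeasurable f (ν.prod (volume.restrict (Ioo a b))) :=
  solution_family_jointly_measurable_general ν a b x₀ hx₀ v hv hvloc f f' hode hmeas0 hmeas1
end

section
/- Let V : L²(ℝ³) → L²(ℤ×ℝ, L²(ℝ₊), μ×λ) be the unitary map defined on smooth compactly supported Ψ by (VΨ)(m,p) = class of r ↦ (√r/2π) ∫_ℝ dz ∫₀^{2π} dφ Ψ(r cos φ, r sin φ, z) e^{ipz + imφ}, where μ is counting measure on ℤ and λ Lebesgue measure on ℝ. Then for Ψ ∈ C₀^∞(ℝ³ \ Z) (Z the z-axis) and the Aharonov–Bohm operator Ȟ Ψ = (−Δ + (2iφ₀/(x²+y²))(y∂ₓ − x∂_y) + φ₀²/(x²+y²)) Ψ with flux parameter φ₀ ∈ ℝ, one has the identity (V Ȟ Ψ)(m,p) = (ȟ_{m−φ₀} + p²)(VΨ)(m,p), where ȟ_κ ψ = −ψ″ + ((κ² − 1/4)/r²) ψ on (0,∞). -/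
open MeasureTheory intervalIntegral

/-- Partial derivative in the first coordinate. -/
noncomputable def pX (f : ℝ × ℝ × ℝ → ℂ) : ℝ × ℝ × ℝ → ℂ :=
  fun v => deriv (fun t => f (t, v.2.1, v.2.2)) v.1

/-- Partial derivative in the second coordinate. -/
noncomputable def pY (f : ℝ × ℝ × ℝ → ℂ) : ℝ × ℝ × ℝ → ℂ :=
  fun v => deriv (fun t => f (v.1, t, v.2.2)) v.2.1

/-- Partial derivative in the third coordinate. -/
noncomputable def pZ (f : ℝ × ℝ × ℝ → ℂ) : ℝ × ℝ × ℝ → ℂ :=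
  fun v => deriv (fun t => f (v.1, v.2.1, t)) v.2.2

/-- The Aharonov–Bohm differential expression
`Ȟ = -Δ + (2iφ₀/(x²+y²))(y ∂ₓ - x ∂_y) + φ₀²/(x²+y²)`. -/
noncomputable def ABop (φ₀ : ℝ) (f : ℝ × ℝ × ℝ → ℂ) : ℝ × ℝ × ℝ → ℂ := fun v =>
  -(pX (pX f) v + pY (pY f) v + pZ (pZ f) v)
    + (2 * Complex.I * (φ₀ : ℂ) / ((v.1 ^ 2 + v.2.1 ^ 2 : ℝ) : ℂ))
        * ((v.2.1 : ℂ) * pX f v - (v.1 : ℂ) * pY f v)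
    + ((φ₀ ^ 2 : ℝ) / ((v.1 ^ 2 + v.2.1 ^ 2 : ℝ)) : ℂ) * f v

/-- The transform `V`: cylindrical coordinates, Fourier transform in `z` and Fourier
expansion in the angle, times `√r`. -/
noncomputable def Vtrans (f : ℝ × ℝ × ℝ → ℂ) (m : ℤ) (p r : ℝ) : ℂ :=
  (Real.sqrt r / (2 * Real.pi)) * ∫ z : ℝ,
    ∫ φ in (0 : ℝ)..(2 * Real.pi),
      f (r * Real.cos φ, r * Real.sin φ, z)
        * Complex.exp (Complex.I * ((p : ℂ) * (z : ℂ) + (m : ℂ) * (φ : ℂ)))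

/-- The radial operator `ȟ_κ ψ = -ψ'' + ((κ² - 1/4)/r²) ψ`. -/
noncomputable def radOp (κ : ℝ) (g : ℝ → ℂ) (r : ℝ) : ℂ :=
  -deriv (deriv g) r + (((κ ^ 2 - 1 / 4) / r ^ 2 : ℝ) : ℂ) * g r

namespace ABaux


variable {f : ℝ × ℝ × ℝ → ℂ}

theorem pX_fderiv (hf : Differentiable ℝ f) (v : ℝ × ℝ × ℝ) :
    pX f v = fderiv ℝ f v (1, 0, 0) := by
  have hcurve : HasDerivAt (fun t : ℝ => ((t, v.2.1, v.2.2) : ℝ × ℝ × ℝ))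
      ((1 : ℝ), (0 : ℝ), (0 : ℝ)) v.1 :=
    (hasDerivAt_id v.1).prodMk ((hasDerivAt_const _ _).prodMk (hasDerivAt_const _ _))
  have h := (hf v).hasFDerivAt.comp_hasDerivAt v.1 hcurve
  simp only [pX, pY, pZ]
  exact h.deriv

theorem pY_fderiv (hf : Differentiable ℝ f) (v : ℝ × ℝ × ℝ) :
    pY f v = fderiv ℝ f v (0, 1, 0) := by
  have hcurve : HasDerivAt (fun t : ℝ => ((v.1, t, v.2.2) : ℝ × ℝ × ℝ))
      ((0 : ℝ), (1 : ℝ), (0 : ℝ)) v.2.1 :=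
    (hasDerivAt_const _ _).prodMk ((hasDerivAt_id _).prodMk (hasDerivAt_const _ _))
  have h := (hf v).hasFDerivAt.comp_hasDerivAt v.2.1 hcurve
  simp only [pX, pY, pZ]
  exact h.deriv

theorem pZ_fderiv (hf : Differentiable ℝ f) (v : ℝ × ℝ × ℝ) :
    pZ f v = fderiv ℝ f v (0, 0, 1) := by
  have hcurve : HasDerivAt (fun t : ℝ => ((v.1, v.2.1, t) : ℝ × ℝ × ℝ))
      ((0 : ℝ), (0 : ℝ), (1 : ℝ)) v.2.2 :=
    (hasDerivAt_const _ _).prodMk ((hasDerivAt_const _ _).prodMk (hasDerivAt_id _))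
  have h := (hf v).hasFDerivAt.comp_hasDerivAt v.2.2 hcurve
  simp only [pX, pY, pZ]
  exact h.deriv

theorem contDiff_pX (hf : ContDiff ℝ (⊤ : ℕ∞) f) : ContDiff ℝ (⊤ : ℕ∞) (pX f) := by
  have : pX f = fun v => fderiv ℝ f v (1, 0, 0) :=
    funext (pX_fderiv (hf.differentiable (by simp)))
  rw [this]
  exact (hf.fderiv_right (by simp)).clm_apply contDiff_const

theorem contDiff_pY (hf : ContDiff ℝ (⊤ : ℕ∞) f) : ContDiff ℝ (⊤ : ℕ∞) (pY f) := by
  have : pY f = fun v => fderiv ℝ f v (0, 1, 0) :=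
    funext (pY_fderiv (hf.differentiable (by simp)))
  rw [this]
  exact (hf.fderiv_right (by simp)).clm_apply contDiff_const

theorem contDiff_pZ (hf : ContDiff ℝ (⊤ : ℕ∞) f) : ContDiff ℝ (⊤ : ℕ∞) (pZ f) := by
  have : pZ f = fun v => fderiv ℝ f v (0, 0, 1) :=
    funext (pZ_fderiv (hf.differentiable (by simp)))
  rw [this]
  exact (hf.fderiv_right (by simp)).clm_apply contDiff_const

theorem pX_eq_zero {v : ℝ × ℝ × ℝ} (hv : v ∉ tsupport f) : pX f v = 0 := by
  have hev : f =ᶠ[nhds v] 0 := notMem_tsupport_iff_eventuallyEq.mp hv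
  have hcont : Continuous (fun t : ℝ => ((t, v.2.1, v.2.2) : ℝ × ℝ × ℝ)) := by fun_prop
  have htend : Filter.Tendsto (fun t : ℝ => ((t, v.2.1, v.2.2) : ℝ × ℝ × ℝ))
      (nhds v.1) (nhds v) := hcont.continuousAt
  have hev2 : (fun t : ℝ => f (t, v.2.1, v.2.2)) =ᶠ[nhds v.1] (fun _ => 0) :=
    hev.comp_tendsto htend
  show deriv _ _ = 0
  rw [hev2.deriv_eq, deriv_const]

theorem pY_eq_zero {v : ℝ × ℝ × ℝ} (hv : v ∉ tsupport f) : pY f v = 0 := by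
  have hev : f =ᶠ[nhds v] 0 := notMem_tsupport_iff_eventuallyEq.mp hv
  have hcont : Continuous (fun t : ℝ => ((v.1, t, v.2.2) : ℝ × ℝ × ℝ)) := by fun_prop
  have hev2 : (fun t : ℝ => f (v.1, t, v.2.2)) =ᶠ[nhds v.2.1] (fun _ => 0) :=
    hev.comp_tendsto hcont.continuousAt
  show deriv _ _ = 0
  rw [hev2.deriv_eq, deriv_const]

theorem pZ_eq_zero {v : ℝ × ℝ × ℝ} (hv : v ∉ tsupport f) : pZ f v = 0 := by
  have hev : f =ᶠ[nhds v] 0 := notMem_tsupport_iff_eventuallyEq.mp hv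
  have hcont : Continuous (fun t : ℝ => ((v.1, v.2.1, t) : ℝ × ℝ × ℝ)) := by fun_prop
  have hev2 : (fun t : ℝ => f (v.1, v.2.1, t)) =ᶠ[nhds v.2.2] (fun _ => 0) :=
    hev.comp_tendsto hcont.continuousAt
  show deriv _ _ = 0
  rw [hev2.deriv_eq, deriv_const]

theorem tsupport_pX_subset : tsupport (pX f) ⊆ tsupport f := by
  apply closure_minimal _ (isClosed_tsupport f)
  intro v hv
  by_contra h
  exact hv (pX_eq_zero h)

theorem tsupport_pY_subset : tsupport (pY f) ⊆ tsupport f := by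
  apply closure_minimal _ (isClosed_tsupport f)
  intro v hv
  by_contra h
  exact hv (pY_eq_zero h)

theorem tsupport_pZ_subset : tsupport (pZ f) ⊆ tsupport f := by
  apply closure_minimal _ (isClosed_tsupport f)
  intro v hv
  by_contra h
  exact hv (pZ_eq_zero h)

theorem hasDerivAt_radial (hf : Differentiable ℝ f) (φ z ρ : ℝ) :
    HasDerivAt (fun t => f (t * Real.cos φ, t * Real.sin φ, z))
      ((Real.cos φ : ℂ) * pX f (ρ * Real.cos φ, ρ * Real.sin φ, z)
        + (Real.sin φ : ℂ) * pY f (ρ * Real.cos φ, ρ * Real.sin φ, z)) ρ := by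
  set v : ℝ × ℝ × ℝ := (ρ * Real.cos φ, ρ * Real.sin φ, z) with hv
  have hc : HasDerivAt (fun t : ℝ => ((t * Real.cos φ, t * Real.sin φ, z) : ℝ × ℝ × ℝ))
      ((Real.cos φ, Real.sin φ, 0) : ℝ × ℝ × ℝ) ρ := by
    have h1 : HasDerivAt (fun t : ℝ => t * Real.cos φ) (Real.cos φ) ρ := by
      simpa using (hasDerivAt_id ρ).mul_const (Real.cos φ)
    have h2 : HasDerivAt (fun t : ℝ => t * Real.sin φ) (Real.sin φ) ρ := by
      simpa using (hasDerivAt_id ρ).mul_const (Real.sin φ)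
    exact h1.prodMk (h2.prodMk (hasDerivAt_const _ _))
  have h := (hf v).hasFDerivAt.comp_hasDerivAt ρ hc
  refine h.congr_deriv ?_
  symm
  have e1 : ((Real.cos φ, Real.sin φ, (0:ℝ)) : ℝ × ℝ × ℝ)
      = Real.cos φ • ((1:ℝ), (0:ℝ), (0:ℝ)) + Real.sin φ • ((0:ℝ), (1:ℝ), (0:ℝ)) := by
    simp [Prod.ext_iff]
  rw [e1, map_add, (fderiv ℝ f v).map_smul, (fderiv ℝ f v).map_smul,
    ← pX_fderiv hf v, ← pY_fderiv hf v]
  simp [Complex.real_smul]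

theorem hasDerivAt_angular (hf : Differentiable ℝ f) (ρ z φ : ℝ) :
    HasDerivAt (fun t => f (ρ * Real.cos t, ρ * Real.sin t, z))
      (((-(ρ * Real.sin φ) : ℝ) : ℂ) * pX f (ρ * Real.cos φ, ρ * Real.sin φ, z)
        + ((ρ * Real.cos φ : ℝ) : ℂ) * pY f (ρ * Real.cos φ, ρ * Real.sin φ, z)) φ := by
  set v : ℝ × ℝ × ℝ := (ρ * Real.cos φ, ρ * Real.sin φ, z) with hv
  have hc : HasDerivAt (fun t : ℝ => ((ρ * Real.cos t, ρ * Real.sin t, z) : ℝ × ℝ × ℝ))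
      ((-(ρ * Real.sin φ), ρ * Real.cos φ, 0) : ℝ × ℝ × ℝ) φ := by
    have h1 : HasDerivAt (fun t : ℝ => ρ * Real.cos t) (-(ρ * Real.sin φ)) φ := by
      simpa [mul_comm, mul_neg] using (Real.hasDerivAt_cos φ).const_mul ρ
    have h2 : HasDerivAt (fun t : ℝ => ρ * Real.sin t) (ρ * Real.cos φ) φ := by
      simpa using (Real.hasDerivAt_sin φ).const_mul ρ
    exact h1.prodMk (h2.prodMk (hasDerivAt_const _ _))
  have h := (hf v).hasFDerivAt.comp_hasDerivAt φ hc
  refine h.congr_deriv ?_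
  symm
  have e1 : ((-(ρ * Real.sin φ), ρ * Real.cos φ, (0:ℝ)) : ℝ × ℝ × ℝ)
      = (-(ρ * Real.sin φ)) • ((1:ℝ), (0:ℝ), (0:ℝ)) + (ρ * Real.cos φ) • ((0:ℝ), (1:ℝ), (0:ℝ)) := by
    simp [Prod.ext_iff]
  rw [e1, map_add, (fderiv ℝ f v).map_smul, (fderiv ℝ f v).map_smul,
    ← pX_fderiv hf v, ← pY_fderiv hf v]
  push_cast
  simp [Complex.real_smul]

theorem hasDerivAt_vert (hf : Differentiable ℝ f) (x y t : ℝ) :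
    HasDerivAt (fun s => f (x, y, s)) (pZ f (x, y, t)) t := by
  have hc : HasDerivAt (fun s : ℝ => ((x, y, s) : ℝ × ℝ × ℝ))
      ((0, 0, 1) : ℝ × ℝ × ℝ) t :=
    (hasDerivAt_const _ _).prodMk ((hasDerivAt_const _ _).prodMk (hasDerivAt_id _))
  have h := (hf (x, y, t)).hasFDerivAt.comp_hasDerivAt t hc
  rw [← pZ_fderiv hf (x, y, t)] at h
  exact h



noncomputable def μm : Measure (ℝ × ℝ) :=
  (volume : Measure ℝ).prod ((volume : Measure ℝ).restrict (Set.Ioc 0 (2 * Real.pi)))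

instance : IsFiniteMeasure ((volume : Measure ℝ).restrict (Set.Ioc 0 (2 * Real.pi))) :=
  ⟨by rw [Measure.restrict_apply_univ]; exact measure_Ioc_lt_top⟩

instance : SFinite ((volume : Measure ℝ).restrict (Set.Ioc 0 (2 * Real.pi))) := by infer_instance

theorem ae_snd_Ioc : ∀ᵐ w : ℝ × ℝ ∂μm, w.2 ∈ Set.Ioc (0:ℝ) (2 * Real.pi) := by
  rw [MeasureTheory.ae_iff]
  have hset : {w : ℝ × ℝ | ¬ w.2 ∈ Set.Ioc (0:ℝ) (2 * Real.pi)}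
      = (Set.univ : Set ℝ) ×ˢ (Set.Ioc (0:ℝ) (2 * Real.pi))ᶜ := by
    ext ⟨a, b⟩; simp
  rw [hset, μm, Measure.prod_prod, Measure.restrict_apply measurableSet_Ioc.compl]
  simp

theorem integrable_master (F : ℝ × ℝ → ℂ) (hFc : Continuous F) {K : Set ℝ}
    (hK : IsCompact K) (hz : ∀ w : ℝ × ℝ, w.1 ∉ K → F w = 0) : Integrable F μm := by
  obtain ⟨C, hC⟩ :=
    (hK.prod (isCompact_Icc : IsCompact (Set.Icc (0:ℝ) (2 * Real.pi)))).exists_bound_of_continuousOn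
      hFc.continuousOn
  set C' := max C 0 with hC'
  have hmK : MeasurableSet K := hK.measurableSet
  have hbint : Integrable (fun w : ℝ × ℝ => Set.indicator K (fun _ => C') w.1) μm := by
    have h1 : Integrable (Set.indicator K (fun _ => C')) (volume : Measure ℝ) := by
      rw [integrable_indicator_iff hmK]
      exact integrableOn_const hK.measure_lt_top.ne
    have h2 : Integrable (fun _ : ℝ => (1:ℝ))
        ((volume : Measure ℝ).restrict (Set.Ioc 0 (2 * Real.pi))) := integrable_const _
    have h3 := h1.mul_prod h2
    simpa [μm] using h3
  apply Integrable.mono' hbint hFc.aestronglyMeasurable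
  filter_upwards [ae_snd_Ioc] with w hw
  by_cases h : w.1 ∈ K
  · have h4 : ‖F w‖ ≤ C := hC w ⟨h, Set.Ioc_subset_Icc_self hw⟩
    rw [Set.indicator_of_mem h]
    exact h4.trans (le_max_left _ _)
  · simp [hz w h, Set.indicator_of_notMem h]

theorem iter_eq_prod (h : ℝ × ℝ → ℂ) (hint : Integrable h μm) :
    ∫ z : ℝ, ∫ φ in (0:ℝ)..(2 * Real.pi), h (z, φ) = ∫ w, h w ∂μm := by
  have hint' : Integrable h
      ((volume : Measure ℝ).prod ((volume : Measure ℝ).restrict (Set.Ioc 0 (2 * Real.pi)))) := hint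
  calc ∫ z : ℝ, ∫ φ in (0:ℝ)..(2 * Real.pi), h (z, φ)
      = ∫ z : ℝ, ∫ φ in Set.Ioc (0:ℝ) (2 * Real.pi), h (z, φ) := by
        refine integral_congr_ae (Filter.Eventually.of_forall fun z => ?_)
        exact intervalIntegral.integral_of_le (by positivity)
    _ = ∫ w, h w ∂μm := (MeasureTheory.integral_prod h hint').symm

theorem phi_ibp (pz : ℂ) (m : ℤ) (u u' : ℝ → ℂ) (hu : ∀ t, HasDerivAt u (u' t) t)
    (hc : Continuous u') (hper : u (2 * Real.pi) = u 0) :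
    ∫ φ in (0:ℝ)..(2 * Real.pi), u' φ * Complex.exp (Complex.I * (pz + (m:ℂ) * (φ:ℂ)))
      = (-(Complex.I * (m:ℂ)))
        * ∫ φ in (0:ℝ)..(2 * Real.pi), u φ * Complex.exp (Complex.I * (pz + (m:ℂ) * (φ:ℂ))) := by
  have hucont : Continuous u := by
    refine continuous_iff_continuousAt.2 fun t => ?_
    exact (hu t).continuousAt
  set e : ℝ → ℂ := fun φ => Complex.exp (Complex.I * (pz + (m:ℂ) * (φ:ℂ))) with he
  have hecont : Continuous e := by
    apply Complex.continuous_exp.comp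
    fun_prop
  have hederiv : ∀ φ : ℝ, HasDerivAt e (Complex.I * (m:ℂ) * e φ) φ := by
    intro φ
    have h1 : HasDerivAt (fun t : ℝ => ((t : ℝ) : ℂ)) 1 φ := by
      simpa using (hasDerivAt_id φ).ofReal_comp
    have h2 : HasDerivAt (fun t : ℝ => Complex.I * (pz + (m:ℂ) * ((t : ℝ) : ℂ)))
        (Complex.I * (m:ℂ)) φ := by
      have h3 := ((h1.const_mul ((m:ℂ))).const_add pz).const_mul Complex.I
      simpa using h3
    have h3 := h2.cexp
    convert h3 using 1
    ring
  have key : ∀ φ : ℝ, HasDerivAt (fun t => u t * e t)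
      (u' φ * e φ + Complex.I * (m:ℂ) * (u φ * e φ)) φ := by
    intro φ
    have h4 := (hu φ).mul (hederiv φ)
    refine h4.congr_deriv ?_
    ring
  have hi1 : IntervalIntegrable (fun φ => u' φ * e φ) volume 0 (2 * Real.pi) :=
    (hc.mul hecont).intervalIntegrable _ _
  have hi2 : IntervalIntegrable (fun φ => Complex.I * (m:ℂ) * (u φ * e φ)) volume 0 (2 * Real.pi) :=
    (continuous_const.mul (hucont.mul hecont)).intervalIntegrable _ _
  have hFTC := intervalIntegral.integral_eq_sub_of_hasDerivAt
    (f := fun t => u t * e t)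
    (f' := fun φ => u' φ * e φ + Complex.I * (m:ℂ) * (u φ * e φ))
    (fun φ _ => key φ) (hi1.add hi2)
  have hee : e (2 * Real.pi) = e 0 := by
    rw [he]
    show Complex.exp _ = Complex.exp _
    have h5 : Complex.I * (pz + (m:ℂ) * (((2 * Real.pi : ℝ)) : ℂ))
        = Complex.I * (pz + (m:ℂ) * (((0:ℝ)) : ℂ)) + (m:ℂ) * (2 * (Real.pi : ℂ) * Complex.I) := by
      push_cast
      ring
    rw [h5, Complex.exp_add, Complex.exp_int_mul_two_pi_mul_I, mul_one]
  rw [intervalIntegral.integral_add hi1 hi2, intervalIntegral.integral_const_mul] at hFTC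
  have hval : (fun t => u t * e t) (2 * Real.pi) - (fun t => u t * e t) 0 = 0 := by
    simp only
    rw [hper, hee]
    ring
  rw [hval] at hFTC
  show (∫ φ in (0:ℝ)..(2 * Real.pi), u' φ * e φ)
    = (-(Complex.I * (m:ℂ))) * ∫ φ in (0:ℝ)..(2 * Real.pi), u φ * e φ
  linear_combination hFTC

theorem integral_deriv_eq_zero' (F : ℝ → ℂ) (hF : ContDiff ℝ 1 F) (hcpt : HasCompactSupport F) :
    ∫ z : ℝ, deriv F z = 0 := by
  have h1 := HasCompactSupport.integral_Iic_deriv_eq hF hcpt 0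
  have h2 := HasCompactSupport.integral_Ioi_deriv_eq hF hcpt 0
  have hi1 : IntegrableOn (deriv F) (Set.Iic (0:ℝ)) volume :=
    ((hF.continuous_deriv le_rfl).integrable_of_hasCompactSupport hcpt.deriv).integrableOn
  have hi2 : IntegrableOn (deriv F) (Set.Ioi (0:ℝ)) volume :=
    ((hF.continuous_deriv le_rfl).integrable_of_hasCompactSupport hcpt.deriv).integrableOn
  rw [← integral_Iic_add_Ioi hi1 hi2, h1, h2]
  ring

theorem z_fourier (p : ℝ) (cm : ℂ) (f : ℝ → ℂ) (hf : ContDiff ℝ (⊤ : ℕ∞) f)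
    (hcpt : HasCompactSupport f) :
    ∫ z : ℝ, deriv f z * Complex.exp (Complex.I * ((p:ℂ) * ((z:ℝ):ℂ) + cm))
      = (-(Complex.I * (p:ℂ)))
        * ∫ z : ℝ, f z * Complex.exp (Complex.I * ((p:ℂ) * ((z:ℝ):ℂ) + cm)) := by
  set e : ℝ → ℂ := fun z => Complex.exp (Complex.I * ((p:ℂ) * ((z:ℝ):ℂ) + cm)) with he
  have hecont : Continuous e := by
    apply Complex.continuous_exp.comp
    fun_prop
  have heCD : ContDiff ℝ 1 e := by
    apply ContDiff.cexp
    have h6 : ContDiff ℝ 1 (fun z : ℝ => ((z:ℝ):ℂ)) := Complex.ofRealCLM.contDiff.of_le le_top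
    exact contDiff_const.mul ((contDiff_const.mul h6).add contDiff_const)
  have hederiv : ∀ z : ℝ, HasDerivAt e (Complex.I * (p:ℂ) * e z) z := by
    intro z
    have h1 : HasDerivAt (fun t : ℝ => ((t : ℝ) : ℂ)) 1 z := by
      simpa using (hasDerivAt_id z).ofReal_comp
    have h2 : HasDerivAt (fun t : ℝ => Complex.I * ((p:ℂ) * ((t : ℝ) : ℂ) + cm))
        (Complex.I * (p:ℂ)) z := by
      have h3 := ((h1.const_mul ((p:ℂ))).add_const cm).const_mul Complex.I
      simpa using h3
    have h3 := h2.cexp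
    convert h3 using 1
    ring
  have hfd : Differentiable ℝ f := hf.differentiable (by simp)
  have hkey : ∀ z, HasDerivAt (fun t => f t * e t)
      (deriv f z * e z + Complex.I * (p:ℂ) * (f z * e z)) z := by
    intro z
    have h4 := (hfd z).hasDerivAt.mul (hederiv z)
    refine h4.congr_deriv ?_
    ring
  have hder : deriv (fun t => f t * e t)
      = fun z => deriv f z * e z + Complex.I * (p:ℂ) * (f z * e z) :=
    funext fun z => (hkey z).deriv
  have hFc1 : ContDiff ℝ 1 (fun t => f t * e t) := (hf.of_le (by simp)).mul heCD
  have hFcs : HasCompactSupport (fun t => f t * e t) := hcpt.mul_right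
  have h0 := integral_deriv_eq_zero' _ hFc1 hFcs
  rw [hder] at h0
  have hi1 : Integrable (fun z => deriv f z * e z) volume :=
    ((hf.continuous_deriv (by simp)).mul hecont).integrable_of_hasCompactSupport
      (hcpt.deriv.mul_right)
  have hi2 : Integrable (fun z => Complex.I * (p:ℂ) * (f z * e z)) volume :=
    (continuous_const.mul (hf.continuous.mul hecont)).integrable_of_hasCompactSupport
      ((hcpt.mul_right).mul_left)
  rw [MeasureTheory.integral_add hi1 hi2, MeasureTheory.integral_const_mul] at h0
  linear_combination h0

theorem z_fourier2 (p : ℝ) (cm : ℂ) (f : ℝ → ℂ) (hf : ContDiff ℝ (⊤ : ℕ∞) f)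
    (hcpt : HasCompactSupport f) :
    ∫ z : ℝ, deriv (deriv f) z * Complex.exp (Complex.I * ((p:ℂ) * ((z:ℝ):ℂ) + cm))
      = (-((p:ℂ)^2))
        * ∫ z : ℝ, f z * Complex.exp (Complex.I * ((p:ℂ) * ((z:ℝ):ℂ) + cm)) := by
  have hdf_smooth : ContDiff ℝ (⊤ : ℕ∞) (deriv f) := by
    have hdd : deriv f = fun z => fderiv ℝ f z 1 := by
      funext z
      rfl
    rw [hdd]
    exact (hf.fderiv_right (by simp)).clm_apply contDiff_const
  have h1 := z_fourier p cm (deriv f) hdf_smooth hcpt.deriv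
  have h2 := z_fourier p cm f hf hcpt
  rw [h1, h2, ← mul_assoc]
  congr 1
  have : Complex.I * Complex.I = -1 := Complex.I_mul_I
  linear_combination ((p:ℂ)^2) * this


noncomputable def cylm (ρ : ℝ) (w : ℝ × ℝ) : ℝ × ℝ × ℝ :=
  (ρ * Real.cos w.2, ρ * Real.sin w.2, w.1)

noncomputable def eFm (p : ℝ) (m : ℤ) (w : ℝ × ℝ) : ℂ :=
  Complex.exp (Complex.I * ((p : ℂ) * (w.1 : ℂ) + (m : ℂ) * (w.2 : ℂ)))

theorem continuous_cylm (ρ : ℝ) : Continuous (cylm ρ) := by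
  unfold cylm; fun_prop

theorem continuous_eFm (p : ℝ) (m : ℤ) : Continuous (eFm p m) := by
  unfold eFm
  apply Complex.continuous_exp.comp
  fun_prop

theorem norm_eFm (p : ℝ) (m : ℤ) (w : ℝ × ℝ) : ‖eFm p m w‖ = 1 := by
  unfold eFm
  rw [show Complex.I * ((p : ℂ) * (w.1 : ℂ) + (m : ℂ) * (w.2 : ℂ))
      = (((p * w.1 + m * w.2 : ℝ)) : ℂ) * Complex.I by push_cast; ring]
  exact Complex.norm_exp_ofReal_mul_I _

theorem norm_comb2 {a b : ℝ} {x y : ℂ} (ha : |a| ≤ 1) (hb : |b| ≤ 1) {Cx Cy : ℝ}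
    (hx : ‖x‖ ≤ Cx) (hy : ‖y‖ ≤ Cy) : ‖(a : ℂ) * x + (b : ℂ) * y‖ ≤ Cx + Cy := by
  calc ‖(a : ℂ) * x + (b : ℂ) * y‖ ≤ ‖(a : ℂ) * x‖ + ‖(b : ℂ) * y‖ := norm_add_le _ _
    _ = |a| * ‖x‖ + |b| * ‖y‖ := by
        rw [norm_mul, norm_mul, Complex.norm_real, Complex.norm_real,
          Real.norm_eq_abs, Real.norm_eq_abs]
    _ ≤ Cx + Cy := by nlinarith [norm_nonneg x, norm_nonneg y, abs_nonneg a, abs_nonneg b,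
        (norm_nonneg x).trans hx, (norm_nonneg y).trans hy]

theorem hasDerivAt_integral_fam
    (F F' : ℝ → (ℝ × ℝ) → ℂ)
    (hFc : ∀ ρ, Continuous (F ρ)) (hF'c : ∀ ρ, Continuous (F' ρ))
    {K : Set ℝ} (hK : IsCompact K)
    (hFz : ∀ ρ (w : ℝ × ℝ), w.1 ∉ K → F ρ w = 0)
    (C : ℝ) (hbd : ∀ ρ (w : ℝ × ℝ), ‖F' ρ w‖ ≤ C * Set.indicator K (fun _ => (1 : ℝ)) w.1)
    (hdiff : ∀ ρ (w : ℝ × ℝ), HasDerivAt (fun t => F t w) (F' ρ w) ρ)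
    (ρ₀ : ℝ) :
    HasDerivAt (fun ρ => ∫ w, F ρ w ∂μm) (∫ w, F' ρ₀ w ∂μm) ρ₀ := by
  have hbint : Integrable (fun w : ℝ × ℝ => C * Set.indicator K (fun _ => (1 : ℝ)) w.1) μm := by
    have h1 : Integrable (fun z : ℝ => C * Set.indicator K (fun _ => (1 : ℝ)) z)
        (volume : Measure ℝ) := by
      apply Integrable.const_mul
      rw [integrable_indicator_iff hK.measurableSet]
      exact integrableOn_const hK.measure_lt_top.ne
    have h2 : Integrable (fun _ : ℝ => (1 : ℝ))
        ((volume : Measure ℝ).restrict (Set.Ioc 0 (2 * Real.pi))) := integrable_const _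
    have h3 := h1.mul_prod h2
    simpa [μm] using h3
  have hFint : Integrable (F ρ₀) μm := integrable_master (F ρ₀) (hFc ρ₀) hK (hFz ρ₀)
  have h := hasDerivAt_integral_of_dominated_loc_of_deriv_le (s := Set.univ) Filter.univ_mem
    (Filter.Eventually.of_forall fun ρ => (hFc ρ).aestronglyMeasurable)
    hFint
    ((hF'c ρ₀).aestronglyMeasurable)
    (Filter.Eventually.of_forall fun w ρ _ => hbd ρ w)
    hbint
    (Filter.Eventually.of_forall fun w ρ _ => hdiff ρ w)
  exact h.2

noncomputable def G0 (Ψ : ℝ × ℝ × ℝ → ℂ) (p : ℝ) (m : ℤ) (ρ : ℝ) (w : ℝ × ℝ) : ℂ :=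
  Ψ (cylm ρ w) * eFm p m w

noncomputable def G1 (Ψ : ℝ × ℝ × ℝ → ℂ) (p : ℝ) (m : ℤ) (ρ : ℝ) (w : ℝ × ℝ) : ℂ :=
  ((Real.cos w.2 : ℂ) * pX Ψ (cylm ρ w) + (Real.sin w.2 : ℂ) * pY Ψ (cylm ρ w)) * eFm p m w

noncomputable def G2 (Ψ : ℝ × ℝ × ℝ → ℂ) (p : ℝ) (m : ℤ) (ρ : ℝ) (w : ℝ × ℝ) : ℂ :=
  ((Real.cos w.2 : ℂ) * ((Real.cos w.2 : ℂ) * pX (pX Ψ) (cylm ρ w)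
      + (Real.sin w.2 : ℂ) * pY (pX Ψ) (cylm ρ w))
    + (Real.sin w.2 : ℂ) * ((Real.cos w.2 : ℂ) * pX (pY Ψ) (cylm ρ w)
      + (Real.sin w.2 : ℂ) * pY (pY Ψ) (cylm ρ w))) * eFm p m w

noncomputable def P1E (Ψ : ℝ × ℝ × ℝ → ℂ) (p : ℝ) (m : ℤ) (ρ : ℝ) (w : ℝ × ℝ) : ℂ :=
  (((-(ρ * Real.sin w.2) : ℝ) : ℂ) * pX Ψ (cylm ρ w)
    + (((ρ * Real.cos w.2) : ℝ) : ℂ) * pY Ψ (cylm ρ w)) * eFm p m w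

noncomputable def P2E (Ψ : ℝ × ℝ × ℝ → ℂ) (p : ℝ) (m : ℤ) (ρ : ℝ) (w : ℝ × ℝ) : ℂ :=
  (((((-(ρ * Real.cos w.2)) : ℝ) : ℂ) * pX Ψ (cylm ρ w)
      + ((-(ρ * Real.sin w.2) : ℝ) : ℂ)
        * (((-(ρ * Real.sin w.2) : ℝ) : ℂ) * pX (pX Ψ) (cylm ρ w)
          + (((ρ * Real.cos w.2) : ℝ) : ℂ) * pY (pX Ψ) (cylm ρ w)))
    + ((((-(ρ * Real.sin w.2)) : ℝ) : ℂ) * pY Ψ (cylm ρ w)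
      + (((ρ * Real.cos w.2) : ℝ) : ℂ)
        * (((-(ρ * Real.sin w.2) : ℝ) : ℂ) * pX (pY Ψ) (cylm ρ w)
          + (((ρ * Real.cos w.2) : ℝ) : ℂ) * pY (pY Ψ) (cylm ρ w)))) * eFm p m w

noncomputable def ZEm (Ψ : ℝ × ℝ × ℝ → ℂ) (p : ℝ) (m : ℤ) (ρ : ℝ) (w : ℝ × ℝ) : ℂ :=
  pZ (pZ Ψ) (cylm ρ w) * eFm p m w

section FamLemmas

variable {Ψ : ℝ × ℝ × ℝ → ℂ} (p : ℝ) (m : ℤ)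

theorem hasDerivAt_G0 (hsm : ContDiff ℝ (⊤ : ℕ∞) Ψ) (ρ : ℝ) (w : ℝ × ℝ) :
    HasDerivAt (fun t => G0 Ψ p m t w) (G1 Ψ p m ρ w) ρ :=
  (hasDerivAt_radial (hsm.differentiable (by simp)) w.2 w.1 ρ).mul_const (eFm p m w)

theorem hasDerivAt_G1 (hsm : ContDiff ℝ (⊤ : ℕ∞) Ψ) (ρ : ℝ) (w : ℝ × ℝ) :
    HasDerivAt (fun t => G1 Ψ p m t w) (G2 Ψ p m ρ w) ρ := by
  have hX := (hasDerivAt_radial (f := pX Ψ) ((contDiff_pX hsm).differentiable (by simp))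
    w.2 w.1 ρ).const_mul ((Real.cos w.2 : ℂ))
  have hY := (hasDerivAt_radial (f := pY Ψ) ((contDiff_pY hsm).differentiable (by simp))
    w.2 w.1 ρ).const_mul ((Real.sin w.2 : ℂ))
  exact (hX.add hY).mul_const (eFm p m w)

theorem hasDerivAt_P1sans (hsm : ContDiff ℝ (⊤ : ℕ∞) Ψ) (ρ z φ : ℝ) :
    HasDerivAt
      (fun t => ((-(ρ * Real.sin t) : ℝ) : ℂ) * pX Ψ (cylm ρ (z, t))
        + (((ρ * Real.cos t) : ℝ) : ℂ) * pY Ψ (cylm ρ (z, t)))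
      (((((-(ρ * Real.cos φ)) : ℝ) : ℂ) * pX Ψ (cylm ρ (z, φ))
        + ((-(ρ * Real.sin φ) : ℝ) : ℂ)
          * (((-(ρ * Real.sin φ) : ℝ) : ℂ) * pX (pX Ψ) (cylm ρ (z, φ))
            + (((ρ * Real.cos φ) : ℝ) : ℂ) * pY (pX Ψ) (cylm ρ (z, φ))))
      + ((((-(ρ * Real.sin φ)) : ℝ) : ℂ) * pY Ψ (cylm ρ (z, φ))
        + (((ρ * Real.cos φ) : ℝ) : ℂ)
          * (((-(ρ * Real.sin φ) : ℝ) : ℂ) * pX (pY Ψ) (cylm ρ (z, φ))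
            + (((ρ * Real.cos φ) : ℝ) : ℂ) * pY (pY Ψ) (cylm ρ (z, φ))))) φ := by
  have hA : HasDerivAt (fun t : ℝ => ((-(ρ * Real.sin t) : ℝ) : ℂ))
      ((-(ρ * Real.cos φ) : ℝ) : ℂ) φ := by
    have h0 : HasDerivAt (fun t : ℝ => -(ρ * Real.sin t)) (-(ρ * Real.cos φ)) φ := by
      exact ((Real.hasDerivAt_sin φ).const_mul ρ).neg
    exact h0.ofReal_comp
  have hB : HasDerivAt (fun t : ℝ => ((ρ * Real.cos t : ℝ) : ℂ))
      ((-(ρ * Real.sin φ) : ℝ) : ℂ) φ := by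
    have h0 : HasDerivAt (fun t : ℝ => ρ * Real.cos t) (-(ρ * Real.sin φ)) φ := by
      simpa [mul_comm, mul_neg] using (Real.hasDerivAt_cos φ).const_mul ρ
    exact h0.ofReal_comp
  have hX := hasDerivAt_angular (f := pX Ψ) ((contDiff_pX hsm).differentiable (by simp)) ρ z φ
  have hY := hasDerivAt_angular (f := pY Ψ) ((contDiff_pY hsm).differentiable (by simp)) ρ z φ
  exact (hA.mul hX).add (hB.mul hY)

theorem Vtrans_eq (Ψ' : ℝ × ℝ × ℝ → ℂ) (m' : ℤ) (p' ρ : ℝ)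
    (hint : Integrable (G0 Ψ' p' m' ρ) μm) :
    Vtrans Ψ' m' p' ρ
      = ((Real.sqrt ρ : ℝ) : ℂ) / (2 * ((Real.pi : ℝ) : ℂ)) * ∫ w, G0 Ψ' p' m' ρ w ∂μm := by
  rw [Vtrans]
  congr 1
  exact iter_eq_prod _ hint

end FamLemmas

end ABaux

set_option maxHeartbeats 2000000 in
open ABaux in
/-- For `Ψ` smooth with compact support away from the `z`-axis, the transform `V`
intertwines the Aharonov–Bohm operator with the direct integral of the radial
operators: `(V Ȟ Ψ)(m,p) = (ȟ_{m-φ₀} + p²)(V Ψ)(m,p)`. -/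
theorem ab_reduction (φ₀ : ℝ) (Ψ : ℝ × ℝ × ℝ → ℂ)
    (hsmooth : ContDiff ℝ (⊤ : ℕ∞) Ψ) (hcpt : HasCompactSupport Ψ)
    (haxis : ∀ v : ℝ × ℝ × ℝ, v.1 = 0 → v.2.1 = 0 → v ∉ tsupport Ψ) :
    ∀ (m : ℤ) (p r : ℝ), 0 < r →
      Vtrans (ABop φ₀ Ψ) m p r
        = radOp ((m : ℝ) - φ₀) (fun ρ => Vtrans Ψ m p ρ) r
          + ((p ^ 2 : ℝ) : ℂ) * Vtrans Ψ m p r := by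
  intro m p r hr
  have hdΨ : Differentiable ℝ Ψ := hsmooth.differentiable (by simp)
  -- support chains
  have hts1 : tsupport (pX Ψ) ⊆ tsupport Ψ := tsupport_pX_subset
  have hts2 : tsupport (pY Ψ) ⊆ tsupport Ψ := tsupport_pY_subset
  have hts11 : tsupport (pX (pX Ψ)) ⊆ tsupport Ψ := tsupport_pX_subset.trans hts1
  have hts21 : tsupport (pY (pX Ψ)) ⊆ tsupport Ψ := tsupport_pY_subset.trans hts1
  have hts12 : tsupport (pX (pY Ψ)) ⊆ tsupport Ψ := tsupport_pX_subset.trans hts2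
  have hts22 : tsupport (pY (pY Ψ)) ⊆ tsupport Ψ := tsupport_pY_subset.trans hts2
  have htsZZ : tsupport (pZ (pZ Ψ)) ⊆ tsupport Ψ :=
    tsupport_pZ_subset.trans tsupport_pZ_subset
  -- smoothness
  have hsX : ContDiff ℝ (⊤ : ℕ∞) (pX Ψ) := contDiff_pX hsmooth
  have hsY : ContDiff ℝ (⊤ : ℕ∞) (pY Ψ) := contDiff_pY hsmooth
  have hsXX : ContDiff ℝ (⊤ : ℕ∞) (pX (pX Ψ)) := contDiff_pX hsX
  have hsYX : ContDiff ℝ (⊤ : ℕ∞) (pY (pX Ψ)) := contDiff_pY hsX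
  have hsXY : ContDiff ℝ (⊤ : ℕ∞) (pX (pY Ψ)) := contDiff_pX hsY
  have hsYY : ContDiff ℝ (⊤ : ℕ∞) (pY (pY Ψ)) := contDiff_pY hsY
  have hsZZ : ContDiff ℝ (⊤ : ℕ∞) (pZ (pZ Ψ)) := contDiff_pZ (contDiff_pZ hsmooth)
  -- the compact z-support
  set K : Set ℝ := (fun v : ℝ × ℝ × ℝ => v.2.2) '' tsupport Ψ with hKdef
  have hKc : IsCompact K := hcpt.image (continuous_snd.comp continuous_snd)
  have hvan : ∀ (f : ℝ × ℝ × ℝ → ℂ), tsupport f ⊆ tsupport Ψ →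
      ∀ (ρ : ℝ) (w : ℝ × ℝ), w.1 ∉ K → f (cylm ρ w) = 0 := by
    intro f hf ρ w hw
    apply image_eq_zero_of_notMem_tsupport
    intro hmem
    exact hw ⟨cylm ρ w, hf hmem, rfl⟩
  -- bounds
  have hbdd : ∀ (f : ℝ × ℝ × ℝ → ℂ), ContDiff ℝ (⊤ : ℕ∞) f → tsupport f ⊆ tsupport Ψ →
      ∃ C, ∀ v, ‖f v‖ ≤ C := by
    intro f hc hts
    have hcs : HasCompactSupport f :=
      IsCompact.of_isClosed_subset hcpt (isClosed_tsupport f) hts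
    exact hcs.exists_bound_of_continuous hc.continuous
  obtain ⟨C1, hC1⟩ := hbdd (pX Ψ) hsX hts1
  obtain ⟨C2, hC2⟩ := hbdd (pY Ψ) hsY hts2
  obtain ⟨C11, hC11⟩ := hbdd _ hsXX hts11
  obtain ⟨C21, hC21⟩ := hbdd _ hsYX hts21
  obtain ⟨C12, hC12⟩ := hbdd _ hsXY hts12
  obtain ⟨C22, hC22⟩ := hbdd _ hsYY hts22
  -- continuity of the families
  have hcoef : ∀ (g : ℝ → ℝ), Continuous g →
      Continuous (fun w : ℝ × ℝ => ((g w.2 : ℝ) : ℂ)) :=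
    fun g hg => Complex.continuous_ofReal.comp (hg.comp continuous_snd)
  have hcG0 : ∀ ρ, Continuous (G0 Ψ p m ρ) := fun ρ =>
    ((hsmooth.continuous).comp (continuous_cylm ρ)).mul (continuous_eFm p m)
  have hcG1 : ∀ ρ, Continuous (G1 Ψ p m ρ) := by
    intro ρ
    unfold G1
    exact (((hcoef _ Real.continuous_cos).mul ((hsX.continuous).comp (continuous_cylm ρ))).add
      ((hcoef _ Real.continuous_sin).mul ((hsY.continuous).comp (continuous_cylm ρ)))).mul
      (continuous_eFm p m)
  have hcG2 : ∀ ρ, Continuous (G2 Ψ p m ρ) := by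
    intro ρ
    unfold G2
    exact (((hcoef _ Real.continuous_cos).mul
        (((hcoef _ Real.continuous_cos).mul ((hsXX.continuous).comp (continuous_cylm ρ))).add
          ((hcoef _ Real.continuous_sin).mul ((hsYX.continuous).comp (continuous_cylm ρ))))).add
      ((hcoef _ Real.continuous_sin).mul
        (((hcoef _ Real.continuous_cos).mul ((hsXY.continuous).comp (continuous_cylm ρ))).add
          ((hcoef _ Real.continuous_sin).mul ((hsYY.continuous).comp (continuous_cylm ρ)))))).mul
      (continuous_eFm p m)
  have hcP1 : ∀ ρ, Continuous (P1E Ψ p m ρ) := by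
    intro ρ
    unfold P1E
    exact (((hcoef (fun t => -(ρ * Real.sin t)) (by fun_prop)).mul
        ((hsX.continuous).comp (continuous_cylm ρ))).add
      ((hcoef (fun t => ρ * Real.cos t) (by fun_prop)).mul
        ((hsY.continuous).comp (continuous_cylm ρ)))).mul
      (continuous_eFm p m)
  have hcP2 : ∀ ρ, Continuous (P2E Ψ p m ρ) := by
    intro ρ
    have ha := hcoef (fun t => -(ρ * Real.sin t)) (by fun_prop)
    have hb := hcoef (fun t => ρ * Real.cos t) (by fun_prop)
    have hc' := hcoef (fun t => -(ρ * Real.cos t)) (by fun_prop)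
    unfold P2E
    exact (((hc'.mul ((hsX.continuous).comp (continuous_cylm ρ))).add
        (ha.mul ((ha.mul ((hsXX.continuous).comp (continuous_cylm ρ))).add
          (hb.mul ((hsYX.continuous).comp (continuous_cylm ρ)))))).add
      ((ha.mul ((hsY.continuous).comp (continuous_cylm ρ))).add
        (hb.mul ((ha.mul ((hsXY.continuous).comp (continuous_cylm ρ))).add
          (hb.mul ((hsYY.continuous).comp (continuous_cylm ρ))))))).mul
      (continuous_eFm p m)
  have hcZE : ∀ ρ, Continuous (ZEm Ψ p m ρ) := fun ρ =>
    ((hsZZ.continuous).comp (continuous_cylm ρ)).mul (continuous_eFm p m)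
  -- vanishing of the families off K
  have hzG0 : ∀ ρ (w : ℝ × ℝ), w.1 ∉ K → G0 Ψ p m ρ w = 0 := by
    intro ρ w hw
    unfold G0
    rw [hvan Ψ subset_rfl ρ w hw, zero_mul]
  have hzG1 : ∀ ρ (w : ℝ × ℝ), w.1 ∉ K → G1 Ψ p m ρ w = 0 := by
    intro ρ w hw
    unfold G1
    rw [hvan _ hts1 ρ w hw, hvan _ hts2 ρ w hw]
    simp
  have hzG2 : ∀ ρ (w : ℝ × ℝ), w.1 ∉ K → G2 Ψ p m ρ w = 0 := by
    intro ρ w hw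
    unfold G2
    rw [hvan _ hts11 ρ w hw, hvan _ hts21 ρ w hw, hvan _ hts12 ρ w hw, hvan _ hts22 ρ w hw]
    simp
  have hzP1 : ∀ ρ (w : ℝ × ℝ), w.1 ∉ K → P1E Ψ p m ρ w = 0 := by
    intro ρ w hw
    unfold P1E
    rw [hvan _ hts1 ρ w hw, hvan _ hts2 ρ w hw]
    simp
  have hzP2 : ∀ ρ (w : ℝ × ℝ), w.1 ∉ K → P2E Ψ p m ρ w = 0 := by
    intro ρ w hw
    unfold P2E
    rw [hvan _ hts1 ρ w hw, hvan _ hts2 ρ w hw, hvan _ hts11 ρ w hw, hvan _ hts21 ρ w hw,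
      hvan _ hts12 ρ w hw, hvan _ hts22 ρ w hw]
    simp
  have hzZE : ∀ ρ (w : ℝ × ℝ), w.1 ∉ K → ZEm Ψ p m ρ w = 0 := by
    intro ρ w hw
    unfold ZEm
    rw [hvan _ htsZZ ρ w hw, zero_mul]
  -- quantitative bounds for the two differentiated families
  have hbG1 : ∀ ρ (w : ℝ × ℝ),
      ‖G1 Ψ p m ρ w‖ ≤ (C1 + C2) * Set.indicator K (fun _ => (1:ℝ)) w.1 := by
    intro ρ w
    by_cases hw : w.1 ∈ K
    · rw [Set.indicator_of_mem hw, mul_one]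
      unfold G1
      rw [norm_mul, norm_eFm, mul_one]
      exact norm_comb2 (Real.abs_cos_le_one _) (Real.abs_sin_le_one _) (hC1 _) (hC2 _)
    · rw [Set.indicator_of_notMem hw, hzG1 ρ w hw]
      simp
  have hbG2 : ∀ ρ (w : ℝ × ℝ),
      ‖G2 Ψ p m ρ w‖ ≤ ((C11 + C21) + (C12 + C22)) * Set.indicator K (fun _ => (1:ℝ)) w.1 := by
    intro ρ w
    by_cases hw : w.1 ∈ K
    · rw [Set.indicator_of_mem hw, mul_one]
      unfold G2
      rw [norm_mul, norm_eFm, mul_one]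
      refine norm_comb2 (Real.abs_cos_le_one _) (Real.abs_sin_le_one _) ?_ ?_
      · exact norm_comb2 (Real.abs_cos_le_one _) (Real.abs_sin_le_one _) (hC11 _) (hC21 _)
      · exact norm_comb2 (Real.abs_cos_le_one _) (Real.abs_sin_le_one _) (hC12 _) (hC22 _)
    · rw [Set.indicator_of_notMem hw, hzG2 ρ w hw]
      simp
  -- integrability
  have hiG0 : ∀ ρ, Integrable (G0 Ψ p m ρ) μm :=
    fun ρ => integrable_master _ (hcG0 ρ) hKc (hzG0 ρ)
  have hiG1 : ∀ ρ, Integrable (G1 Ψ p m ρ) μm :=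
    fun ρ => integrable_master _ (hcG1 ρ) hKc (hzG1 ρ)
  have hiG2 : ∀ ρ, Integrable (G2 Ψ p m ρ) μm :=
    fun ρ => integrable_master _ (hcG2 ρ) hKc (hzG2 ρ)
  have hiP1 : ∀ ρ, Integrable (P1E Ψ p m ρ) μm :=
    fun ρ => integrable_master _ (hcP1 ρ) hKc (hzP1 ρ)
  have hiP2 : ∀ ρ, Integrable (P2E Ψ p m ρ) μm :=
    fun ρ => integrable_master _ (hcP2 ρ) hKc (hzP2 ρ)
  have hiZE : ∀ ρ, Integrable (ZEm Ψ p m ρ) μm :=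
    fun ρ => integrable_master _ (hcZE ρ) hKc (hzZE ρ)
  -- the radial function and its derivatives
  have hd1 : ∀ ρ₀ : ℝ, HasDerivAt (fun ρ => ∫ w, G0 Ψ p m ρ w ∂μm)
      (∫ w, G1 Ψ p m ρ₀ w ∂μm) ρ₀ :=
    fun ρ₀ => hasDerivAt_integral_fam _ _ hcG0 hcG1 hKc hzG0 (C1 + C2) hbG1
      (fun ρ w => hasDerivAt_G0 p m hsmooth ρ w) ρ₀
  have hd2 : ∀ ρ₀ : ℝ, HasDerivAt (fun ρ => ∫ w, G1 Ψ p m ρ w ∂μm)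
      (∫ w, G2 Ψ p m ρ₀ w ∂μm) ρ₀ :=
    fun ρ₀ => hasDerivAt_integral_fam _ _ hcG1 hcG2 hKc hzG1 ((C11 + C21) + (C12 + C22)) hbG2
      (fun ρ w => hasDerivAt_G1 p m hsmooth ρ w) ρ₀
  -- the angular integration by parts
  have hEP1 : ∫ w, P1E Ψ p m r w ∂μm
      = (-(Complex.I * (m:ℂ))) * ∫ w, G0 Ψ p m r w ∂μm := by
    rw [← iter_eq_prod _ (hiP1 r), ← iter_eq_prod _ (hiG0 r), ← MeasureTheory.integral_const_mul]
    refine integral_congr_ae (Filter.Eventually.of_forall fun z => ?_)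
    have hslc : Continuous (fun φ : ℝ => cylm r (z, φ)) := by
      simp only [cylm]
      fun_prop
    have hu'c : Continuous (fun φ : ℝ => ((-(r * Real.sin φ) : ℝ) : ℂ) * pX Ψ (cylm r (z, φ))
        + (((r * Real.cos φ) : ℝ) : ℂ) * pY Ψ (cylm r (z, φ))) :=
      ((Complex.continuous_ofReal.comp
          (by fun_prop : Continuous fun φ : ℝ => -(r * Real.sin φ))).mul
        ((hsX.continuous).comp hslc)).add
      ((Complex.continuous_ofReal.comp
          (by fun_prop : Continuous fun φ : ℝ => r * Real.cos φ)).mul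
        ((hsY.continuous).comp hslc))
    exact phi_ibp ((p:ℂ) * (z:ℂ)) m (fun φ => Ψ (cylm r (z, φ)))
      (fun φ => ((-(r * Real.sin φ) : ℝ) : ℂ) * pX Ψ (cylm r (z, φ))
        + (((r * Real.cos φ) : ℝ) : ℂ) * pY Ψ (cylm r (z, φ)))
      (fun φ => hasDerivAt_angular hdΨ r z φ)
      hu'c
      (by simp [cylm, Real.cos_two_pi, Real.sin_two_pi])
  have hEP2 : ∫ w, P2E Ψ p m r w ∂μm
      = (-(Complex.I * (m:ℂ))) * ∫ w, P1E Ψ p m r w ∂μm := by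
    rw [← iter_eq_prod _ (hiP2 r), ← iter_eq_prod _ (hiP1 r), ← MeasureTheory.integral_const_mul]
    refine integral_congr_ae (Filter.Eventually.of_forall fun z => ?_)
    have hslc : Continuous (fun φ : ℝ => cylm r (z, φ)) := by
      simp only [cylm]
      fun_prop
    have hac : Continuous (fun φ : ℝ => ((-(r * Real.sin φ) : ℝ) : ℂ)) :=
      Complex.continuous_ofReal.comp (by fun_prop)
    have hbc : Continuous (fun φ : ℝ => (((r * Real.cos φ) : ℝ) : ℂ)) :=
      Complex.continuous_ofReal.comp (by fun_prop)
    have hcc : Continuous (fun φ : ℝ => ((-(r * Real.cos φ) : ℝ) : ℂ)) :=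
      Complex.continuous_ofReal.comp (by fun_prop)
    have hu'c : Continuous (fun φ : ℝ =>
        (((-(r * Real.cos φ) : ℝ) : ℂ) * pX Ψ (cylm r (z, φ))
          + ((-(r * Real.sin φ) : ℝ) : ℂ)
            * (((-(r * Real.sin φ) : ℝ) : ℂ) * pX (pX Ψ) (cylm r (z, φ))
              + (((r * Real.cos φ) : ℝ) : ℂ) * pY (pX Ψ) (cylm r (z, φ))))
        + ((((-(r * Real.sin φ)) : ℝ) : ℂ) * pY Ψ (cylm r (z, φ))
          + (((r * Real.cos φ) : ℝ) : ℂ)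
            * (((-(r * Real.sin φ) : ℝ) : ℂ) * pX (pY Ψ) (cylm r (z, φ))
              + (((r * Real.cos φ) : ℝ) : ℂ) * pY (pY Ψ) (cylm r (z, φ))))) :=
      ((hcc.mul ((hsX.continuous).comp hslc)).add
        (hac.mul ((hac.mul ((hsXX.continuous).comp hslc)).add
          (hbc.mul ((hsYX.continuous).comp hslc))))).add
      ((hac.mul ((hsY.continuous).comp hslc)).add
        (hbc.mul ((hac.mul ((hsXY.continuous).comp hslc)).add
          (hbc.mul ((hsYY.continuous).comp hslc)))))
    exact phi_ibp ((p:ℂ) * (z:ℂ)) m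
      (fun φ => ((-(r * Real.sin φ) : ℝ) : ℂ) * pX Ψ (cylm r (z, φ))
        + (((r * Real.cos φ) : ℝ) : ℂ) * pY Ψ (cylm r (z, φ)))
      (fun φ =>
        (((-(r * Real.cos φ) : ℝ) : ℂ) * pX Ψ (cylm r (z, φ))
          + ((-(r * Real.sin φ) : ℝ) : ℂ)
            * (((-(r * Real.sin φ) : ℝ) : ℂ) * pX (pX Ψ) (cylm r (z, φ))
              + (((r * Real.cos φ) : ℝ) : ℂ) * pY (pX Ψ) (cylm r (z, φ))))
        + ((((-(r * Real.sin φ)) : ℝ) : ℂ) * pY Ψ (cylm r (z, φ))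
          + (((r * Real.cos φ) : ℝ) : ℂ)
            * (((-(r * Real.sin φ) : ℝ) : ℂ) * pX (pY Ψ) (cylm r (z, φ))
              + (((r * Real.cos φ) : ℝ) : ℂ) * pY (pY Ψ) (cylm r (z, φ)))))
      (fun φ => hasDerivAt_P1sans hsmooth r z φ)
      hu'c
      (by simp [cylm, Real.cos_two_pi, Real.sin_two_pi])
  have hEZ : ∫ w, ZEm Ψ p m r w ∂μm
      = (-((p:ℂ)^2)) * ∫ w, G0 Ψ p m r w ∂μm := by
    have h1 := MeasureTheory.integral_prod_symm (ZEm Ψ p m r) (hiZE r)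
    have h0 := MeasureTheory.integral_prod_symm (G0 Ψ p m r) (hiG0 r)
    rw [show (∫ w, ZEm Ψ p m r w ∂μm) = _ from h1,
      show (∫ w, G0 Ψ p m r w ∂μm) = _ from h0, ← MeasureTheory.integral_const_mul]
    refine integral_congr_ae (Filter.Eventually.of_forall fun φ => ?_)
    have hfsm : ContDiff ℝ (⊤ : ℕ∞) (fun t : ℝ => Ψ (r * Real.cos φ, r * Real.sin φ, t)) :=
      hsmooth.comp (contDiff_const.prodMk (contDiff_const.prodMk contDiff_id))
    have hfcs : HasCompactSupport (fun t : ℝ => Ψ (r * Real.cos φ, r * Real.sin φ, t)) := by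
      apply HasCompactSupport.intro hKc
      intro t ht
      apply image_eq_zero_of_notMem_tsupport
      intro hmem
      exact ht ⟨_, hmem, rfl⟩
    have hdd : ∀ z : ℝ, pZ (pZ Ψ) (cylm r (z, φ))
        = deriv (deriv (fun t : ℝ => Ψ (r * Real.cos φ, r * Real.sin φ, t))) z := by
      intro z
      have h3 : (fun t : ℝ => pZ Ψ (r * Real.cos φ, r * Real.sin φ, t))
          = deriv (fun t : ℝ => Ψ (r * Real.cos φ, r * Real.sin φ, t)) := rfl
      show deriv (fun t : ℝ => pZ Ψ (r * Real.cos φ, r * Real.sin φ, t)) z = _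
      rw [h3]
    have h4 := z_fourier2 p ((m:ℂ) * (φ:ℂ)) _ hfsm hfcs
    calc ∫ z, ZEm Ψ p m r (z, φ)
        = ∫ z, deriv (deriv (fun t : ℝ => Ψ (r * Real.cos φ, r * Real.sin φ, t))) z
            * Complex.exp (Complex.I * ((p:ℂ) * ((z:ℝ):ℂ) + (m:ℂ) * (φ:ℂ))) := rfl
      _ = (-((p:ℂ)^2)) * ∫ z, Ψ (r * Real.cos φ, r * Real.sin φ, z)
            * Complex.exp (Complex.I * ((p:ℂ) * ((z:ℝ):ℂ) + (m:ℂ) * (φ:ℂ))) := h4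
      _ = (-((p:ℂ)^2)) * ∫ z, G0 Ψ p m r (z, φ) := rfl
  have hrC : ((r:ℝ):ℂ) ≠ 0 := by exact_mod_cast hr.ne'
  set comboE : ℝ × ℝ → ℂ := fun w =>
    (-(1:ℂ)) * G2 Ψ p m r w + (-(1/(r:ℂ))) * G1 Ψ p m r w
      + (-(1/(r:ℂ)^2)) * P2E Ψ p m r w + (-(1:ℂ)) * ZEm Ψ p m r w
      + (-(2*Complex.I*(φ₀:ℂ)/(r:ℂ)^2)) * P1E Ψ p m r w
      + ((φ₀:ℂ)^2/(r:ℂ)^2) * G0 Ψ p m r w with hcomboE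
  have hpw : ∀ z φ : ℝ,
      ABop φ₀ Ψ (r * Real.cos φ, r * Real.sin φ, z)
        * Complex.exp (Complex.I * ((p : ℂ) * (z : ℂ) + (m : ℂ) * (φ : ℂ)))
      = comboE (z, φ) := by
    intro z φ
    have htrig : ((Real.cos φ : ℝ) : ℂ)^2 + ((Real.sin φ : ℝ) : ℂ)^2 = 1 := by
      have h := Real.cos_sq_add_sin_sq φ
      exact_mod_cast congrArg (fun t : ℝ => (t : ℂ)) h
    have hxy : ((r * Real.cos φ) ^ 2 + (r * Real.sin φ) ^ 2 : ℝ) = r ^ 2 := by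
      nlinarith [Real.sin_sq_add_cos_sq φ]
    have hS1 : ((r:ℝ):ℂ) * ((r:ℝ):ℂ)⁻¹ = 1 := mul_inv_cancel₀ hrC
    simp only [hcomboE, ABop, G0, G1, G2, P1E, P2E, ZEm, cylm, eFm]
    rw [hxy]
    push_cast [-Complex.ofReal_sin, -Complex.ofReal_cos]
    linear_combination
      (Complex.exp (Complex.I * ((p:ℂ) * (z:ℂ) + (m:ℂ) * (φ:ℂ)))
        * (pX (pX Ψ) (r * Real.cos φ, r * Real.sin φ, z)
          + pY (pY Ψ) (r * Real.cos φ, r * Real.sin φ, z))) * htrig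
      + (Complex.exp (Complex.I * ((p:ℂ) * (z:ℂ) + (m:ℂ) * (φ:ℂ)))
        * ((1 + ((r:ℝ):ℂ) * ((r:ℝ):ℂ)⁻¹)
            * (((Real.sin φ:ℝ):ℂ)^2 * pX (pX Ψ) (r * Real.cos φ, r * Real.sin φ, z)
              + ((Real.cos φ:ℝ):ℂ)^2 * pY (pY Ψ) (r * Real.cos φ, r * Real.sin φ, z)
              - ((Real.cos φ:ℝ):ℂ) * ((Real.sin φ:ℝ):ℂ)
                  * pY (pX Ψ) (r * Real.cos φ, r * Real.sin φ, z)
              - ((Real.cos φ:ℝ):ℂ) * ((Real.sin φ:ℝ):ℂ)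
                  * pX (pY Ψ) (r * Real.cos φ, r * Real.sin φ, z))
          - ((r:ℝ):ℂ)⁻¹ * (((Real.cos φ:ℝ):ℂ) * pX Ψ (r * Real.cos φ, r * Real.sin φ, z)
              + ((Real.sin φ:ℝ):ℂ) * pY Ψ (r * Real.cos φ, r * Real.sin φ, z)))) * hS1
  have hiCombo : Integrable comboE μm := by
    rw [hcomboE]
    exact ((((((hiG2 r).const_mul _).add ((hiG1 r).const_mul _)).add
      ((hiP2 r).const_mul _)).add ((hiZE r).const_mul _)).add
      ((hiP1 r).const_mul _)).add ((hiG0 r).const_mul _)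
  have hL : Vtrans (ABop φ₀ Ψ) m p r
      = ((Real.sqrt r : ℂ) / (2 * (Real.pi : ℂ))) * ∫ w, comboE w ∂μm := by
    rw [Vtrans]
    congr 1
    calc (∫ z : ℝ, ∫ φ in (0:ℝ)..(2*Real.pi),
          ABop φ₀ Ψ (r * Real.cos φ, r * Real.sin φ, z)
            * Complex.exp (Complex.I * ((p : ℂ) * (z : ℂ) + (m : ℂ) * (φ : ℂ))))
        = ∫ z : ℝ, ∫ φ in (0:ℝ)..(2*Real.pi), comboE (z, φ) := by
          refine integral_congr_ae (Filter.Eventually.of_forall fun z => ?_)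
          exact intervalIntegral.integral_congr (fun φ _ => hpw z φ)
      _ = ∫ w, comboE w ∂μm := iter_eq_prod _ hiCombo
  have h1 := (hiG2 r).const_mul (-(1:ℂ))
  have h2 := (hiG1 r).const_mul (-(1/(r:ℂ)))
  have h3 := (hiP2 r).const_mul (-(1/(r:ℂ)^2))
  have h4 := (hiZE r).const_mul (-(1:ℂ))
  have h5 := (hiP1 r).const_mul (-(2*Complex.I*(φ₀:ℂ)/(r:ℂ)^2))
  have h6 := (hiG0 r).const_mul ((φ₀:ℂ)^2/(r:ℂ)^2)
  have hsplit : ∫ w, comboE w ∂μm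
      = (-(1:ℂ)) * (∫ w, G2 Ψ p m r w ∂μm) + (-(1/(r:ℂ))) * (∫ w, G1 Ψ p m r w ∂μm)
        + (-(1/(r:ℂ)^2)) * (∫ w, P2E Ψ p m r w ∂μm) + (-(1:ℂ)) * (∫ w, ZEm Ψ p m r w ∂μm)
        + (-(2*Complex.I*(φ₀:ℂ)/(r:ℂ)^2)) * (∫ w, P1E Ψ p m r w ∂μm)
        + ((φ₀:ℂ)^2/(r:ℂ)^2) * (∫ w, G0 Ψ p m r w ∂μm) := by
    have h12 : Integrable (fun w : ℝ × ℝ => (-(1:ℂ)) * G2 Ψ p m r w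
        + (-(1/(r:ℂ))) * G1 Ψ p m r w) μm := h1.add h2
    have h123 : Integrable (fun w : ℝ × ℝ => (-(1:ℂ)) * G2 Ψ p m r w
        + (-(1/(r:ℂ))) * G1 Ψ p m r w + (-(1/(r:ℂ)^2)) * P2E Ψ p m r w) μm := h12.add h3
    have h1234 : Integrable (fun w : ℝ × ℝ => (-(1:ℂ)) * G2 Ψ p m r w
        + (-(1/(r:ℂ))) * G1 Ψ p m r w + (-(1/(r:ℂ)^2)) * P2E Ψ p m r w
        + (-(1:ℂ)) * ZEm Ψ p m r w) μm := h123.add h4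
    have h12345 : Integrable (fun w : ℝ × ℝ => (-(1:ℂ)) * G2 Ψ p m r w
        + (-(1/(r:ℂ))) * G1 Ψ p m r w + (-(1/(r:ℂ)^2)) * P2E Ψ p m r w
        + (-(1:ℂ)) * ZEm Ψ p m r w
        + (-(2*Complex.I*(φ₀:ℂ)/(r:ℂ)^2)) * P1E Ψ p m r w) μm := h1234.add h5
    rw [hcomboE]
    rw [MeasureTheory.integral_add h12345 h6,
      MeasureTheory.integral_add h1234 h5,
      MeasureTheory.integral_add h123 h4,
      MeasureTheory.integral_add h12 h3,
      MeasureTheory.integral_add h1 h2,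
      MeasureTheory.integral_const_mul, MeasureTheory.integral_const_mul,
      MeasureTheory.integral_const_mul, MeasureTheory.integral_const_mul,
      MeasureTheory.integral_const_mul, MeasureTheory.integral_const_mul]
  have hVr : ∀ ρ, Vtrans Ψ m p ρ
      = ((Real.sqrt ρ : ℂ) / (2*(Real.pi:ℂ))) * ∫ w, G0 Ψ p m ρ w ∂μm :=
    fun ρ => Vtrans_eq Ψ m p ρ (hiG0 ρ)
  have hVfun : (fun ρ => Vtrans Ψ m p ρ)
      = fun ρ => ((Real.sqrt ρ : ℂ) / (2*(Real.pi:ℂ))) * ∫ w, G0 Ψ p m ρ w ∂μm :=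
    funext hVr
  have hW : ∀ ρ : ℝ, 0 < ρ → HasDerivAt
      (fun ρ' => ((Real.sqrt ρ' : ℂ) / (2*(Real.pi:ℂ))) * ∫ w, G0 Ψ p m ρ' w ∂μm)
      (((1/(2*Real.sqrt ρ) : ℝ) : ℂ) / (2*(Real.pi:ℂ)) * ∫ w, G0 Ψ p m ρ w ∂μm
        + ((Real.sqrt ρ : ℂ) / (2*(Real.pi:ℂ))) * ∫ w, G1 Ψ p m ρ w ∂μm) ρ := by
    intro ρ hρ
    have hsC : HasDerivAt (fun ρ' : ℝ => ((Real.sqrt ρ' : ℝ) : ℂ))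
        ((1/(2*Real.sqrt ρ) : ℝ) : ℂ) ρ := (Real.hasDerivAt_sqrt hρ.ne').ofReal_comp
    exact (hsC.div_const _).mul (hd1 ρ)
  have hdV1 : deriv (fun ρ' => ((Real.sqrt ρ' : ℂ) / (2*(Real.pi:ℂ))) * ∫ w, G0 Ψ p m ρ' w ∂μm)
      =ᶠ[nhds r] (fun ρ => ((1/(2*Real.sqrt ρ) : ℝ) : ℂ) / (2*(Real.pi:ℂ))
          * ∫ w, G0 Ψ p m ρ w ∂μm
        + ((Real.sqrt ρ : ℂ) / (2*(Real.pi:ℂ))) * ∫ w, G1 Ψ p m ρ w ∂μm) := by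
    filter_upwards [isOpen_Ioi.mem_nhds hr] with ρ hρ
    exact (hW ρ hρ).deriv
  have hsp : 0 < Real.sqrt r := Real.sqrt_pos.mpr hr
  have hsq2 : HasDerivAt (fun ρ : ℝ => 1/(2*Real.sqrt ρ))
      (-(2*(1/(2*Real.sqrt r))) / (2*Real.sqrt r)^2) r := by
    have h2' : HasDerivAt (fun ρ : ℝ => 2*Real.sqrt ρ) (2*(1/(2*Real.sqrt r))) r :=
      (Real.hasDerivAt_sqrt hr.ne').const_mul 2
    have h3' := h2'.inv (mul_pos two_pos hsp).ne'
    simpa [one_div, Pi.inv_def] using h3'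
  have hterm1 : HasDerivAt
      (fun ρ => ((1/(2*Real.sqrt ρ) : ℝ) : ℂ) / (2*(Real.pi:ℂ)) * ∫ w, G0 Ψ p m ρ w ∂μm)
      ((((-(2*(1/(2*Real.sqrt r))) / (2*Real.sqrt r)^2 : ℝ)) : ℂ) / (2*(Real.pi:ℂ))
          * ∫ w, G0 Ψ p m r w ∂μm
        + ((1/(2*Real.sqrt r) : ℝ) : ℂ) / (2*(Real.pi:ℂ)) * ∫ w, G1 Ψ p m r w ∂μm) r :=
    ((hsq2.ofReal_comp).div_const _).mul (hd1 r)
  have hterm2 : HasDerivAt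
      (fun ρ => ((Real.sqrt ρ : ℂ) / (2*(Real.pi:ℂ))) * ∫ w, G1 Ψ p m ρ w ∂μm)
      (((1/(2*Real.sqrt r) : ℝ) : ℂ) / (2*(Real.pi:ℂ)) * ∫ w, G1 Ψ p m r w ∂μm
        + ((Real.sqrt r : ℂ) / (2*(Real.pi:ℂ))) * ∫ w, G2 Ψ p m r w ∂μm) r :=
    (((Real.hasDerivAt_sqrt hr.ne').ofReal_comp).div_const _).mul (hd2 r)
  have hdd2 : deriv (deriv
      (fun ρ' => ((Real.sqrt ρ' : ℂ) / (2*(Real.pi:ℂ))) * ∫ w, G0 Ψ p m ρ' w ∂μm)) r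
      = ((((-(2*(1/(2*Real.sqrt r))) / (2*Real.sqrt r)^2 : ℝ)) : ℂ) / (2*(Real.pi:ℂ))
          * ∫ w, G0 Ψ p m r w ∂μm
        + ((1/(2*Real.sqrt r) : ℝ) : ℂ) / (2*(Real.pi:ℂ)) * ∫ w, G1 Ψ p m r w ∂μm)
        + (((1/(2*Real.sqrt r) : ℝ) : ℂ) / (2*(Real.pi:ℂ)) * ∫ w, G1 Ψ p m r w ∂μm
          + ((Real.sqrt r : ℂ) / (2*(Real.pi:ℂ))) * ∫ w, G2 Ψ p m r w ∂μm) := by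
    rw [Filter.EventuallyEq.deriv_eq hdV1]
    exact (hterm1.add hterm2).deriv
  have hEP2' : ∫ w, P2E Ψ p m r w ∂μm = (-((m:ℂ)^2)) * ∫ w, G0 Ψ p m r w ∂μm := by
    rw [hEP2, hEP1, ← mul_assoc]
    congr 1
    linear_combination (m:ℂ)^2 * Complex.I_mul_I
  have hcross : (-(2*Complex.I*(φ₀:ℂ)/(r:ℂ)^2)) * (∫ w, P1E Ψ p m r w ∂μm)
      = (-(2*(m:ℂ)*(φ₀:ℂ))/(r:ℂ)^2) * ∫ w, G0 Ψ p m r w ∂μm := by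
    rw [hEP1]
    linear_combination (2*(m:ℂ)*(φ₀:ℂ)/(r:ℂ)^2 * (∫ w, G0 Ψ p m r w ∂μm)) * Complex.I_mul_I
  have hdd2' : deriv (deriv (fun ρ => Vtrans Ψ m p ρ)) r
      = ((((-(2*(1/(2*Real.sqrt r))) / (2*Real.sqrt r)^2 : ℝ)) : ℂ) / (2*(Real.pi:ℂ))
          * ∫ w, G0 Ψ p m r w ∂μm
        + ((1/(2*Real.sqrt r) : ℝ) : ℂ) / (2*(Real.pi:ℂ)) * ∫ w, G1 Ψ p m r w ∂μm)
        + (((1/(2*Real.sqrt r) : ℝ) : ℂ) / (2*(Real.pi:ℂ)) * ∫ w, G1 Ψ p m r w ∂μm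
          + ((Real.sqrt r : ℂ) / (2*(Real.pi:ℂ))) * ∫ w, G2 Ψ p m r w ∂μm) := by
    rw [hVfun]
    exact hdd2
  rw [hL, hsplit, hEP2', hcross, hEZ, radOp, hdd2', hVr r]
  have hsC : ((Real.sqrt r : ℝ) : ℂ) ≠ 0 := by exact_mod_cast hsp.ne'
  have hπC : ((Real.pi : ℝ) : ℂ) ≠ 0 := by exact_mod_cast Real.pi_ne_zero
  have hrs : ((r:ℝ):ℂ) = ((Real.sqrt r : ℝ) : ℂ)^2 := by
    exact_mod_cast congrArg (fun t : ℝ => (t : ℂ)) (Real.sq_sqrt hr.le).symm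
  push_cast
  rw [hrs]
  have hs1 : ((Real.sqrt r : ℝ) : ℂ) * ((Real.sqrt r : ℝ) : ℂ)⁻¹ = 1 := mul_inv_cancel₀ hsC
  linear_combination
    (-(1/2) * ((Real.sqrt r : ℝ) : ℂ)⁻¹ * ((Real.pi : ℝ) : ℂ)⁻¹ * (∫ w, G1 Ψ p m r w ∂μm)
      + (1/8) * (((Real.sqrt r : ℝ) : ℂ)⁻¹)^3 * ((Real.pi : ℝ) : ℂ)⁻¹
          * (∫ w, G0 Ψ p m r w ∂μm)) * hs1
end
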